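/- arXiv:1607.01204 — 11 statements merged into one kernel-verified Lean document; each statement's English description precedes it below -/
import Mathlib

section
/- Let (N,+) be a group, Φ ≤ Aut(N) a group of fixed point free automorphisms acting on the right such that -id + φ is bijective for every non-identity φ in Φ, R a set of orbit representatives, M ⊆ R, and define a*b = 0 if the representative of b lies in M, and a*b = aφ_b otherwise (where b = r_b φ_b uniquely). Then (N,+,*) is a right nearring satisfying the planarity conditions. -/
class RightNearring (N : Type*) extends AddGroup N, Mul N where
  mul_assoc : ∀ a b c : N, a * b * c = a * (b * c)
  right_distrib : ∀ a b c : N, (a + b) * c = a * c + b * c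

/-- `a` and `b` are equivalent multipliers: `x*a = x*b` for all `x`. -/
def EquivMult {N : Type*} [Mul N] (a b : N) : Prop := ∀ x : N, x * a = x * b

class PlanarNearring (N : Type*) extends RightNearring N where
  three_classes : ∃ a b c : N, ¬ EquivMult a b ∧ ¬ EquivMult b c ∧ ¬ EquivMult a c
  planar : ∀ a b c : N, ¬ EquivMult a b → ∃! x : N, x * a = x * b + c

/-- The set of distributive elements of a right nearring. -/
def DSet (N : Type*) [RightNearring N] : Set N :=
  {d | ∀ a b : N, d * (a + b) = d * a + d * b}

/-- The set of zero multipliers of a right nearring. -/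
def ZM (N : Type*) [RightNearring N] : Set N := {n | ∀ a : N, a * n = 0}

/-- The generalized centre. -/
def GC (N : Type*) [RightNearring N] : Set N := {n | ∀ d ∈ DSet N, n * d = d * n}

/-- The orbit of `d` under `Φ`, together with `0`. -/
def orbitZ (Φ : Type*) {N : Type*} [SMul Φ N] [Zero N] (d : N) : Set N :=
  {x | x = 0 ∨ ∃ φ : Φ, φ • d = x}

/-- A planar nearring presented by a fixed point free automorphism group `Φ`,
orbit representatives `R` and zero-multiplier representatives `M ⊆ R`. -/
structure FerreroStructure (Φ N : Type*) [Group Φ] [PlanarNearring N]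
    [DistribMulAction Φ N] where
  fpf : ∀ φ : Φ, φ ≠ 1 → ∀ n : N, φ • n = n → n = 0
  reg : ∀ φ : Φ, φ ≠ 1 → Function.Bijective (fun n : N => -n + φ • n)
  R : Set N
  M : Set N
  M_sub : M ⊆ R
  zero_not_mem : (0 : N) ∉ R
  rep : N → N
  aut : N → Φ
  rep_mem : ∀ n : N, n ≠ 0 → rep n ∈ R
  decomp : ∀ n : N, n ≠ 0 → aut n • rep n = n
  unique : ∀ n : N, n ≠ 0 → ∀ r ∈ R, ∀ φ : Φ, φ • r = n → r = rep n ∧ φ = aut n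
  mul_eq : ∀ a b : N, b ≠ 0 → rep b ∉ M → a * b = aut b • a
  mul_zm : ∀ a b : N, b ≠ 0 → rep b ∈ M → a * b = 0

/-- the Ferrero construction yields a planar right nearring. -/
theorem stmt2 {N Φ : Type*} [AddGroup N] [Group Φ] [DistribMulAction Φ N]
    (fpf : ∀ φ : Φ, φ ≠ 1 → ∀ n : N, φ • n = n → n = 0)
    (reg : ∀ φ : Φ, φ ≠ 1 → Function.Bijective (fun n : N => -n + φ • n))
    (R M : Set N) (hMR : M ⊆ R) (h0R : (0 : N) ∉ R)
    (rep : N → N) (aut : N → Φ)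
    (hrep : ∀ n : N, n ≠ 0 → rep n ∈ R)
    (hdec : ∀ n : N, n ≠ 0 → aut n • rep n = n)
    (huniq : ∀ n : N, n ≠ 0 → ∀ r ∈ R, ∀ φ : Φ, φ • r = n → r = rep n ∧ φ = aut n)
    (hΦ : ∃ φ : Φ, φ ≠ 1) (hRM : ∃ r ∈ R, r ∉ M)
    (mul : N → N → N)
    (hmul0 : ∀ a b : N, b = 0 ∨ rep b ∈ M → mul a b = 0)
    (hmul : ∀ a b : N, b ≠ 0 → rep b ∉ M → mul a b = aut b • a) :
    -- `(N,+,mul)` is a right nearring: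
    (∀ a b c : N, mul (mul a b) c = mul a (mul b c)) ∧
    (∀ a b c : N, mul (a + b) c = mul a c + mul b c) ∧
    -- the equivalent multiplier relation has at least 3 classes:
    (∃ a b c : N, ¬ (∀ x : N, mul x a = mul x b) ∧ ¬ (∀ x : N, mul x b = mul x c) ∧
      ¬ (∀ x : N, mul x a = mul x c)) ∧
    -- unique solutions:
    (∀ a b c : N, ¬ (∀ x : N, mul x a = mul x b) → ∃! x : N, mul x a = mul x b + c) := by

  have smulne : ∀ (φ : Φ) (n : N), n ≠ 0 → φ • n ≠ 0 := by
    intro φ n hn h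
    exact hn (MulAction.injective φ (h.trans (smul_zero φ).symm))
  have hrepsmul : ∀ (φ : Φ) (b : N), b ≠ 0 →
      rep (φ • b) = rep b ∧ aut (φ • b) = φ * aut b := by
    intro φ b hb
    have hb' : φ • b ≠ 0 := smulne φ b hb
    have h := huniq (φ • b) hb' (rep b) (hrep b hb) (φ * aut b)
      (by rw [mul_smul, hdec b hb])
    exact ⟨h.1.symm, h.2.symm⟩
  refine ⟨?_, ?_, ?_, ?_⟩
  · -- associativity
    intro a b c
    by_cases hc : c = 0 ∨ rep c ∈ M
    · rw [hmul0 _ _ hc, hmul0 _ _ hc, hmul0 a 0 (Or.inl rfl)]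
    · push_neg at hc
      obtain ⟨hc0, hcM⟩ := hc
      rw [hmul _ _ hc0 hcM, hmul _ _ hc0 hcM]
      by_cases hb : b = 0
      · subst hb
        rw [hmul0 a 0 (Or.inl rfl), smul_zero, hmul0 a 0 (Or.inl rfl)]
      · by_cases hbM : rep b ∈ M
        · rw [hmul0 a b (Or.inr hbM), smul_zero]
          have hM : rep (aut c • b) ∈ M := by
            rw [(hrepsmul (aut c) b hb).1]; exact hbM
          rw [hmul0 a _ (Or.inr hM)]
        · rw [hmul a b hb hbM]
          have hsb : aut c • b ≠ 0 := smulne (aut c) b hb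
          rw [hmul a _ hsb (by rw [(hrepsmul (aut c) b hb).1]; exact hbM),
            (hrepsmul (aut c) b hb).2, mul_smul]
  · -- right distributivity
    intro a b c
    by_cases hc : c = 0 ∨ rep c ∈ M
    · rw [hmul0 _ _ hc, hmul0 _ _ hc, hmul0 _ _ hc, add_zero]
    · push_neg at hc
      rw [hmul _ _ hc.1 hc.2, hmul _ _ hc.1 hc.2, hmul _ _ hc.1 hc.2, smul_add]
  · -- three classes
    obtain ⟨r, hrR, hrM⟩ := hRM
    obtain ⟨φ, hφ⟩ := hΦ
    have hr0 : r ≠ 0 := fun h => h0R (h ▸ hrR)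
    have hrr : rep r = r ∧ aut r = 1 := by
      have h := huniq r hr0 r hrR 1 (one_smul _ _)
      exact ⟨h.1.symm, h.2.symm⟩
    have hmulr : ∀ x, mul x r = x := by
      intro x
      rw [hmul x r hr0 (by rw [hrr.1]; exact hrM), hrr.2, one_smul]
    have hb0 : φ • r ≠ 0 := smulne φ r hr0
    have hmulb : ∀ x, mul x (φ • r) = φ • x := by
      intro x
      rw [hmul x _ hb0 (by rw [(hrepsmul φ r hr0).1, hrr.1]; exact hrM),
        (hrepsmul φ r hr0).2, hrr.2, mul_one]
    refine ⟨r, φ • r, 0, ?_, ?_, ?_⟩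
    · intro h
      have := (h r).symm
      rw [hmulr, hmulb] at this
      exact hr0 (fpf φ hφ r this)
    · intro h
      have := h r
      rw [hmulb, hmul0 r 0 (Or.inl rfl)] at this
      exact smulne φ r hr0 this
    · intro h
      have := h r
      rw [hmulr, hmul0 r 0 (Or.inl rfl)] at this
      exact hr0 this
  · -- planarity
    intro a b c hne
    by_cases ha : a = 0 ∨ rep a ∈ M <;> by_cases hb : b = 0 ∨ rep b ∈ M
    · exact absurd (fun x => by rw [hmul0 _ _ ha, hmul0 _ _ hb]) hne
    · push_neg at hb
      set ψ := aut b with hψ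
      have hmb : ∀ x, mul x b = ψ • x := fun x => hmul x b hb.1 hb.2
      refine ⟨ψ⁻¹ • (-c), ?_, ?_⟩
      · show mul _ a = mul _ b + c
        rw [hmul0 _ _ ha, hmb, smul_inv_smul, neg_add_cancel]
      · intro y hy
        rw [hmul0 _ _ ha, hmb] at hy
        have : ψ • y = -c := by
          rw [eq_neg_iff_add_eq_zero, hy.symm]
        rw [← this, inv_smul_smul]
    · push_neg at ha
      set φ := aut a with hφ
      have hma : ∀ x, mul x a = φ • x := fun x => hmul x a ha.1 ha.2
      refine ⟨φ⁻¹ • c, ?_, ?_⟩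
      · show mul _ a = mul _ b + c
        rw [hma, hmul0 _ _ hb, smul_inv_smul, zero_add]
      · intro y hy
        rw [hma, hmul0 _ _ hb, zero_add] at hy
        rw [← hy, inv_smul_smul]
    · push_neg at ha; push_neg at hb
      set φ := aut a with hφ
      set ψ := aut b with hψ
      have hma : ∀ x, mul x a = φ • x := fun x => hmul x a ha.1 ha.2
      have hmb : ∀ x, mul x b = ψ • x := fun x => hmul x b hb.1 hb.2
      have hfψ : φ ≠ ψ := by
        intro h
        exact hne (fun x => by rw [hma, hmb, h])
      have hg : φ * ψ⁻¹ ≠ 1 := by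
        intro h
        exact hfψ (by rwa [mul_inv_eq_one] at h)
      have bij := reg (φ * ψ⁻¹) hg
      have key : ∀ x : N, (mul x a = mul x b + c) ↔
          -(ψ • x) + (φ * ψ⁻¹) • (ψ • x) = c := by
        intro x
        rw [hma, hmb, ← mul_smul, inv_mul_cancel_right]
        constructor
        · intro h
          rw [h, neg_add_cancel_left]
        · intro h
          rw [← h, add_neg_cancel_left]
      obtain ⟨y, hy⟩ := bij.2 c
      simp only at hy
      refine ⟨ψ⁻¹ • y, ?_, ?_⟩
      · show mul _ a = mul _ b + c
        rw [key, smul_inv_smul]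
        exact hy
      · intro z hz
        have h1 := (key z).1 hz
        have h2 : ψ • z = y := bij.1 (h1.trans hy.symm)
        rw [← h2, inv_smul_smul]
end

section
/- A planar nearring has a left identity if and only if it has a two-sided identity, if and only if it has exactly one nontrivial Φ-orbit, if and only if it is a planar nearfield. -/
section Helpers

variable {Φ N : Type*} [Group Φ] [PlanarNearring N] [DistribMulAction Φ N]

lemma fs_zero_mul (b : N) : (0 : N) * b = 0 := by
  have h := RightNearring.right_distrib (0 : N) 0 b
  rw [add_zero] at h
  exact (add_eq_left.mp h.symm)

lemma fs_smul_ne_zero (φ : Φ) {x : N} (h : x ≠ 0) : φ • x ≠ 0 := by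
  intro h0
  apply h
  have := congrArg (fun y => φ⁻¹ • y) h0
  simpa [inv_smul_smul] using this

lemma no_equiv_all (h : ∀ a b : N, a ≠ 0 → b ≠ 0 → EquivMult a b) : False := by
  obtain ⟨a, b, c, hab, hbc, hac⟩ := PlanarNearring.three_classes (N := N)
  by_cases ha : a = 0 <;> by_cases hb : b = 0 <;> by_cases hc : c = 0
  · exact hab (by subst ha; subst hb; intro x; rfl)
  · exact hab (by subst ha; subst hb; intro x; rfl)
  · exact hac (by subst ha; subst hc; intro x; rfl)
  · exact hbc (h b c hb hc)
  · exact hbc (by subst hb; subst hc; intro x; rfl)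
  · exact hac (h a c ha hc)
  · exact hab (h a b ha hb)
  · exact hab (h a b ha hb)

lemma fs_exists_nonzero : ∃ n : N, n ≠ 0 := by
  obtain ⟨a, b, c, hab, _, _⟩ := PlanarNearring.three_classes (N := N)
  by_cases ha : a = 0
  · refine ⟨b, fun hb => hab ?_⟩
    subst ha; subst hb; intro x; rfl
  · exact ⟨a, ha⟩

lemma fs_mul_zero (S : FerreroStructure Φ N) (a : N) : a * 0 = 0 := by
  by_contra h
  have key : ∀ b : N, (a * 0) * b = a * 0 := fun b => by
    rw [RightNearring.mul_assoc, fs_zero_mul]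
  by_cases hzm : ∃ b : N, b ≠ 0 ∧ S.rep b ∈ S.M
  · obtain ⟨b, hb, hbM⟩ := hzm
    exact h ((key b).symm.trans (S.mul_zm (a * 0) b hb hbM))
  · push_neg at hzm
    apply no_equiv_all (N := N)
    intro b b' hb hb' x
    have hone : ∀ c : N, c ≠ 0 → S.aut c = 1 := by
      intro c hc
      by_contra hne
      have := key c
      rw [S.mul_eq (a * 0) c hc (hzm c hc)] at this
      exact h (S.fpf _ hne _ this)
    rw [S.mul_eq x b hb (hzm b hb), S.mul_eq x b' hb' (hzm b' hb'),
      hone b hb, hone b' hb']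

lemma fs_left_id_imp_two (S : FerreroStructure Φ N)
    (h : ∃ e : N, ∀ n : N, e * n = n) :
    ∃ e : N, ∀ n : N, e * n = n ∧ n * e = n := by
  obtain ⟨e, he⟩ := h
  have hne : e ≠ 0 := by
    rintro rfl
    obtain ⟨n, hn⟩ := fs_exists_nonzero (N := N)
    exact hn ((he n).symm.trans (fs_zero_mul n))
  have hM : S.rep e ∉ S.M := fun hM =>
    hne ((he e).symm.trans (S.mul_zm e e hne hM))
  have haut : S.aut e = 1 := by
    by_contra hne1
    have : S.aut e • e = e := (S.mul_eq e e hne hM).symm.trans (he e)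
    exact hne (S.fpf _ hne1 _ this)
  refine ⟨e, fun n => ⟨he n, ?_⟩⟩
  rw [S.mul_eq n e hne hM, haut, one_smul]

lemma fs_two_imp_orbit (S : FerreroStructure Φ N)
    (h : ∃ e : N, ∀ n : N, e * n = n ∧ n * e = n) :
    (∃ n : N, n ≠ 0) ∧ ∀ a b : N, a ≠ 0 → b ≠ 0 → S.rep a = S.rep b := by
  obtain ⟨e, he⟩ := h
  have hne : e ≠ 0 := by
    rintro rfl
    obtain ⟨n, hn⟩ := fs_exists_nonzero (N := N)
    exact hn ((he n).1.symm.trans (fs_zero_mul n))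
  have key : ∀ n : N, n ≠ 0 → S.rep n = S.rep e := by
    intro n hn
    have hM : S.rep n ∉ S.M := fun hM =>
      hn ((he n).1.symm.trans (S.mul_zm e n hn hM))
    have hen : S.aut n • e = n := (S.mul_eq e n hn hM).symm.trans (he n).1
    have := S.unique n hn (S.rep e) (S.rep_mem e hne) (S.aut n * S.aut e)
      (by rw [mul_smul, S.decomp e hne, hen])
    exact this.1.symm
  exact ⟨fs_exists_nonzero, fun a b ha hb => (key a ha).trans (key b hb).symm⟩

lemma fs_orbit_imp_field (S : FerreroStructure Φ N)
    (h : (∃ n : N, n ≠ 0) ∧ ∀ a b : N, a ≠ 0 → b ≠ 0 → S.rep a = S.rep b) :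
    ∃ e : N, e ≠ 0 ∧ (∀ n : N, e * n = n ∧ n * e = n) ∧
      ∀ n : N, n ≠ 0 → ∃ m : N, m ≠ 0 ∧ n * m = e ∧ m * n = e := by
  obtain ⟨⟨n₀, hn₀⟩, horb⟩ := h
  set r₀ := S.rep n₀ with hr₀def
  have hr₀R : r₀ ∈ S.R := S.rep_mem n₀ hn₀
  have hr₀ : r₀ ≠ 0 := fun h0 => S.zero_not_mem (h0 ▸ hr₀R)
  have hrep : ∀ n : N, n ≠ 0 → S.rep n = r₀ := fun n hn => horb n n₀ hn hn₀
  have hM : r₀ ∉ S.M := by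
    intro hm
    apply no_equiv_all (N := N)
    intro b b' hb hb' x
    rw [S.mul_zm x b hb ((hrep b hb).symm ▸ hm), S.mul_zm x b' hb' ((hrep b' hb').symm ▸ hm)]
  have huni := S.unique r₀ hr₀ r₀ hr₀R 1 (one_smul Φ r₀)
  have hrr : S.rep r₀ = r₀ := huni.1.symm
  have har : S.aut r₀ = 1 := huni.2.symm
  have hid : ∀ n : N, r₀ * n = n ∧ n * r₀ = n := by
    intro n
    constructor
    · by_cases hn : n = 0
      · rw [hn, fs_mul_zero S]
      · rw [S.mul_eq r₀ n hn ((hrep n hn).symm ▸ hM), ← hrep n hn, S.decomp n hn]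
    · rw [S.mul_eq n r₀ hr₀ (hrr.symm ▸ hM), har, one_smul]
  refine ⟨r₀, hr₀, hid, fun n hn => ?_⟩
  refine ⟨(S.aut n)⁻¹ • r₀, fs_smul_ne_zero _ hr₀, ?_, ?_⟩
  · have hm0 : (S.aut n)⁻¹ • r₀ ≠ 0 := fs_smul_ne_zero _ hr₀
    have huni' := S.unique _ hm0 r₀ hr₀R ((S.aut n)⁻¹) rfl
    rw [S.mul_eq n _ hm0 (huni'.1 ▸ hM), ← huni'.2,
      ← hrep n hn, inv_smul_eq_iff, S.decomp n hn]
  · rw [S.mul_eq _ n hn ((hrep n hn).symm ▸ hM), smul_inv_smul]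

end Helpers

/-- a planar nearring has a left identity iff it has a two-sided identity,
iff it has exactly one nontrivial `Φ`-orbit, iff it is a planar nearfield. -/
theorem stmt4 {Φ N : Type*} [Group Φ] [PlanarNearring N] [DistribMulAction Φ N]
    (S : FerreroStructure Φ N) :
    ((∃ e : N, ∀ n : N, e * n = n) ↔ (∃ e : N, ∀ n : N, e * n = n ∧ n * e = n)) ∧
    ((∃ e : N, ∀ n : N, e * n = n ∧ n * e = n) ↔
      ((∃ n : N, n ≠ 0) ∧ ∀ a b : N, a ≠ 0 → b ≠ 0 → S.rep a = S.rep b)) ∧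
    (((∃ n : N, n ≠ 0) ∧ ∀ a b : N, a ≠ 0 → b ≠ 0 → S.rep a = S.rep b) ↔
      (∃ e : N, e ≠ 0 ∧ (∀ n : N, e * n = n ∧ n * e = n) ∧
        ∀ n : N, n ≠ 0 → ∃ m : N, m ≠ 0 ∧ n * m = e ∧ m * n = e)) := by
  refine ⟨⟨fs_left_id_imp_two S, fun ⟨e, h⟩ => ⟨e, fun n => (h n).1⟩⟩,
    ⟨fs_two_imp_orbit S, fun h => ?_⟩,
    ⟨fs_orbit_imp_field S, fun ⟨e, _, hid, _⟩ => fs_two_imp_orbit S ⟨e, hid⟩⟩⟩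
  obtain ⟨e, _, hid, _⟩ := fs_orbit_imp_field S h
  exact ⟨e, hid⟩
end

section
/- Let N be a planar nearring and d ∈ N a distributive element (d*(a+b) = d*a + d*b for all a,b). Then the set dΦ* = dΦ ∪ {0} is closed under addition. -/
/-- for a distributive element `d`, the set `dΦ ∪ {0}` is additively closed. -/
theorem stmt5 {Φ N : Type*} [Group Φ] [PlanarNearring N] [DistribMulAction Φ N]
    (S : FerreroStructure Φ N) (d : N) (hd : d ∈ DSet N) :
    ∀ x ∈ orbitZ Φ d, ∀ y ∈ orbitZ Φ d, x + y ∈ orbitZ Φ d := by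

  have hd0 : d * 0 = 0 := by
    have h := hd 0 0
    rw [add_zero] at h
    nth_rewrite 1 [← add_zero (d * 0)] at h
    exact (add_left_cancel h).symm
  have hrex : ∃ r, r ∈ S.R ∧ r ∉ S.M := by
    by_contra h
    push_neg at h
    have hzero : ∀ x b : N, b ≠ 0 → x * b = 0 := fun x b hb =>
      S.mul_zm x b hb (h _ (S.rep_mem b hb))
    obtain ⟨a, b, c, hab, hbc, hac⟩ := PlanarNearring.three_classes (N := N)
    have equiv : ∀ u v : N, u ≠ 0 → v ≠ 0 → EquivMult u v := fun u v hu hv x => by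
      rw [hzero x u hu, hzero x v hv]
    by_cases ha : a = 0
    · by_cases hb : b = 0
      · exact hab (by rw [ha, hb]; intro x; rfl)
      · by_cases hc : c = 0
        · exact hac (by rw [ha, hc]; intro x; rfl)
        · exact hbc (equiv b c hb hc)
    · by_cases hb : b = 0
      · by_cases hc : c = 0
        · exact hbc (by rw [hb, hc]; intro x; rfl)
        · exact hac (equiv a c ha hc)
      · exact hab (equiv a b ha hb)
  obtain ⟨r, hrR, hrM⟩ := hrex
  have hr0 : r ≠ 0 := fun h => S.zero_not_mem (h ▸ hrR)
  intro x hx y hy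
  rcases hx with hx0 | ⟨φ, hφ⟩
  · rw [hx0, zero_add]; exact hy
  rcases hy with hy0 | ⟨ψ, hψ⟩
  · rw [hy0, add_zero]; exact Or.inr ⟨φ, hφ⟩
  have smul_ne : ∀ χ : Φ, χ • r ≠ 0 := by
    intro χ h
    apply hr0
    have h2 := congrArg (χ⁻¹ • ·) h
    simpa using h2
  have key : ∀ χ : Φ, d * (χ • r) = χ • d := by
    intro χ
    obtain ⟨h1, h2⟩ := S.unique (χ • r) (smul_ne χ) r hrR χ rfl
    rw [S.mul_eq d (χ • r) (smul_ne χ) (h1 ▸ hrM), ← h2]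
  have hsum : x + y = d * (φ • r + ψ • r) := by
    rw [hd, key, key, hφ, hψ]
  by_cases hz : φ • r + ψ • r = 0
  · exact Or.inl (by rw [hsum, hz, hd0])
  by_cases hM : S.rep (φ • r + ψ • r) ∈ S.M
  · exact Or.inl (by rw [hsum, S.mul_zm _ _ hz hM])
  · exact Or.inr ⟨S.aut (φ • r + ψ • r), by rw [hsum, S.mul_eq _ _ hz hM]⟩
end

section
/- Let N be a planar nearring and d = r_d φ_d ∈ D(N) a distributive element that is not a zero multiplier. Then {φ ∈ Φ : r_d φ ∈ D(N)} is a subgroup of Φ containing the centre Z(Φ). -/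
section AuxLemmas
variable {N : Type*} [PlanarNearring N]

lemma zeroMulAux (y : N) : (0 : N) * y = 0 := by
  have h := RightNearring.right_distrib (0 : N) 0 y
  rw [add_zero] at h
  have h2 : (0 : N) * y + 0 = 0 * y + 0 * y := by rw [add_zero]; exact h
  exact (add_left_cancel h2).symm

lemma mulZeroAux (a : N) : a * (0 : N) = 0 := by
  obtain ⟨x, y, z, hxy, -, -⟩ := PlanarNearring.three_classes (N := N)
  obtain ⟨w, hw, huniq⟩ := PlanarNearring.planar x y 0 hxy
  have h1 : (a * 0) * x = (a * 0) * y + 0 := by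
    rw [RightNearring.mul_assoc, RightNearring.mul_assoc, zeroMulAux x, zeroMulAux y,
      add_zero]
  have h0 : (0 : N) * x = (0 : N) * y + 0 := by
    rw [zeroMulAux x, zeroMulAux y, add_zero]
  exact (huniq _ h1).trans (huniq _ h0).symm

end AuxLemmas

/-- for a distributive non zero multiplier `d = r_d φ_d`,
`{φ ∈ Φ | r_d φ ∈ D(N)}` is a subgroup of `Φ` containing the centre `Z(Φ)`. -/
theorem stmt6 {Φ N : Type*} [Group Φ] [PlanarNearring N] [DistribMulAction Φ N]
    (S : FerreroStructure Φ N) (d : N) (hd : d ∈ DSet N) (hnz : d ∉ ZM N) :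
    ∃ H : Subgroup Φ,
      (H : Set Φ) = {φ : Φ | φ • S.rep d ∈ DSet N} ∧ Subgroup.center Φ ≤ H := by

  have hd' : ∀ a b : N, d * (a + b) = d * a + d * b := hd
  have hd0 : ∀ a : N, a * (0 : N) = 0 := mulZeroAux
  have dne : d ≠ 0 := by
    intro h
    exact hnz (fun a => by rw [h]; exact hd0 a)
  set r : N := S.rep d with hrdef
  have hrR : r ∈ S.R := S.rep_mem d dne
  have hrne : r ≠ 0 := fun h => S.zero_not_mem (h ▸ hrR)
  have hrM : r ∉ S.M := fun h => hnz (fun a => S.mul_zm a d dne h)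
  have hz : ∀ (ψ : Φ) (x : N), ψ • x = 0 → x = 0 := by
    intro ψ x h
    have := congrArg (fun y => ψ⁻¹ • y) h
    simpa using this
  have hone : ∀ φ : Φ, φ • r ≠ 0 := fun φ h => hrne (hz φ r h)
  have hur : ∀ φ : Φ, r = S.rep (φ • r) ∧ φ = S.aut (φ • r) :=
    fun φ => S.unique (φ • r) (hone φ) r hrR φ rfl
  have mulO : ∀ (a : N) (φ : Φ), a * (φ • r) = φ • a := by
    intro a φ
    rw [S.mul_eq a (φ • r) (hone φ) (by rw [← (hur φ).1]; exact hrM), ← (hur φ).2]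
  have hinj : ∀ (x : N), x ≠ 0 → ∀ ψ χ : Φ, ψ • x = χ • x → ψ = χ := by
    intro x hx ψ χ h
    by_contra hne
    have h1 : (χ⁻¹ * ψ) • x = x := by rw [mul_smul, h, inv_smul_smul]
    exact hx (S.fpf (χ⁻¹ * ψ) (fun hc => hne ((inv_mul_eq_one.mp hc).symm)) x h1)
  have hdd : S.aut d • r = d := S.decomp d dne
  have hdd2 : ∀ ψ : Φ, ψ • d = (ψ * S.aut d) • r := by
    intro ψ; rw [← smul_smul, hdd]
  have hLr : ∀ y : N, r * y = 0 ∨ ∃ ψ : Φ, r * y = ψ • r := by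
    intro y
    by_cases h0 : y = 0
    · exact Or.inl (by rw [h0, hd0])
    by_cases hm : S.rep y ∈ S.M
    · exact Or.inl (S.mul_zm r y h0 hm)
    · exact Or.inr ⟨S.aut y, S.mul_eq r y h0 hm⟩
  have lemC : ∀ x y : N, x * (r * y) = x * y := by
    intro x y
    by_cases h0 : y = 0
    · rw [h0, hd0]
    by_cases hm : S.rep y ∈ S.M
    · rw [S.mul_zm r y h0 hm, S.mul_zm x y h0 hm, hd0]
    · rw [S.mul_eq r y h0 hm, mulO x (S.aut y), S.mul_eq x y h0 hm]
  have hA : ∀ α β : Φ, α • r + β • r = 0 ∨ ∃ γ : Φ, α • r + β • r = γ • r := by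
    intro α β
    by_cases h0 : α • r + β • r = 0
    · exact Or.inl h0
    right
    have key : d * ((α * (S.aut d)⁻¹) • r + (β * (S.aut d)⁻¹) • r) = α • r + β • r := by
      rw [hd', mulO, mulO, hdd2, hdd2, inv_mul_cancel_right, inv_mul_cancel_right]
    set s : N := (α * (S.aut d)⁻¹) • r + (β * (S.aut d)⁻¹) • r with hs
    have hsne : s ≠ 0 := by intro h; rw [h, hd0] at key; exact h0 key.symm
    have hsM : S.rep s ∉ S.M := by
      intro h; rw [S.mul_zm d s hsne h] at key; exact h0 key.symm
    refine ⟨S.aut s * S.aut d, ?_⟩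
    rw [← key, S.mul_eq d s hsne hsM, hdd2]
  have hcan : ∀ x y : N, (x = 0 ∨ ∃ ψ : Φ, x = ψ • r) → (y = 0 ∨ ∃ ψ : Φ, y = ψ • r) →
      d * x = d * y → x = y := by
    intro x y hx hy h
    rcases hx with rfl | ⟨ψ, rfl⟩ <;> rcases hy with rfl | ⟨χ, rfl⟩
    · rfl
    · rw [hd0, mulO] at h
      exact absurd (hz χ d h.symm) dne
    · rw [hd0, mulO] at h
      exact absurd (hz ψ d h) dne
    · rw [mulO, mulO] at h
      rw [hinj d dne ψ χ h]
  have hsum_orb : ∀ a b : N, r * a + r * b = 0 ∨ ∃ ψ : Φ, r * a + r * b = ψ • r := by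
    intro a b
    rcases hLr a with ha | ⟨ψa, ha⟩ <;> rcases hLr b with hb | ⟨ψb, hb⟩
    · exact Or.inl (by rw [ha, hb, add_zero])
    · exact Or.inr ⟨ψb, by rw [ha, hb, zero_add]⟩
    · exact Or.inr ⟨ψa, by rw [ha, hb, add_zero]⟩
    · rw [ha, hb]; exact hA ψa ψb
  have hrD : ∀ a b : N, r * (a + b) = r * a + r * b := by
    intro a b
    apply hcan _ _ (hLr (a + b)) (hsum_orb a b)
    rw [lemC d (a + b), hd' a b, ← lemC d a, ← lemC d b, ← hd' (r * a) (r * b)]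
  have hmulD : ∀ x y : N, (∀ a b : N, x * (a + b) = x * a + x * b) →
      (∀ a b : N, y * (a + b) = y * a + y * b) →
      ∀ a b : N, (x * y) * (a + b) = (x * y) * a + (x * y) * b := by
    intro x y hx hy a b
    rw [RightNearring.mul_assoc, hy a b, hx (y * a) (y * b), ← RightNearring.mul_assoc,
      ← RightNearring.mul_assoc]
  have hinv : ∀ φ : Φ, (∀ a b : N, (φ • r) * (a + b) = (φ • r) * a + (φ • r) * b) →
      ∀ a b : N, (φ⁻¹ • r) * (a + b) = (φ⁻¹ • r) * a + (φ⁻¹ • r) * b := by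
    intro φ hφ
    have hB : ∀ x y : N, (x = 0 ∨ ∃ ψ : Φ, x = ψ • r) → (y = 0 ∨ ∃ ψ : Φ, y = ψ • r) →
        (φ⁻¹ • r) * (x + y) = (φ⁻¹ • r) * x + (φ⁻¹ • r) * y := by
      intro x y hx hy
      rcases hx with rfl | ⟨α, rfl⟩
      · rw [zero_add, hd0, zero_add]
      rcases hy with rfl | ⟨β, rfl⟩
      · rw [add_zero, hd0, add_zero]
      have key : (φ • r) * ((α * φ⁻¹) • r + (β * φ⁻¹) • r) = α • r + β • r := by
        rw [hφ, mulO, mulO, smul_smul, smul_smul, inv_mul_cancel_right,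
          inv_mul_cancel_right]
      rcases hA (α * φ⁻¹) (β * φ⁻¹) with h0 | ⟨γ, hγ⟩
      · rw [h0, hd0] at key
        rw [← key, hd0, mulO, mulO, smul_smul, smul_smul]
        exact h0.symm
      · rw [hγ, mulO, smul_smul] at key
        rw [← key, mulO, mulO, mulO, smul_smul, smul_smul, smul_smul,
          mul_inv_cancel_right]
        exact hγ.symm
    intro a b
    calc (φ⁻¹ • r) * (a + b) = (φ⁻¹ • r) * (r * (a + b)) := (lemC _ _).symm
      _ = (φ⁻¹ • r) * (r * a + r * b) := by rw [hrD a b]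
      _ = (φ⁻¹ • r) * (r * a) + (φ⁻¹ • r) * (r * b) := hB _ _ (hLr a) (hLr b)
      _ = (φ⁻¹ • r) * a + (φ⁻¹ • r) * b := by rw [lemC, lemC]
  refine ⟨{ carrier := {φ : Φ | φ • r ∈ DSet N}
            one_mem' := ?_
            mul_mem' := ?_
            inv_mem' := ?_ }, rfl, ?_⟩
  · intro φ ψ hφ hψ
    have hφ' : ∀ a b : N, (φ • r) * (a + b) = (φ • r) * a + (φ • r) * b := hφ
    have hψ' : ∀ a b : N, (ψ • r) * (a + b) = (ψ • r) * a + (ψ • r) * b := hψ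
    have he : (φ * ψ) • r = (ψ • r) * (φ • r) := by rw [mulO (ψ • r) φ, smul_smul]
    have : ∀ a b : N, ((φ * ψ) • r) * (a + b) = ((φ * ψ) • r) * a + ((φ * ψ) • r) * b := by
      intro a b
      rw [he]
      exact hmulD _ _ hψ' hφ' a b
    exact this
  · have : ∀ a b : N, ((1 : Φ) • r) * (a + b) = ((1 : Φ) • r) * a + ((1 : Φ) • r) * b := by
      simp only [one_smul]
      exact hrD
    exact this
  · intro φ hφ
    have hφ' : ∀ a b : N, (φ • r) * (a + b) = (φ • r) * a + (φ • r) * b := hφ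
    exact hinv φ hφ'
  · intro ψ hψ
    have hcomm : ∀ g : Φ, g * ψ = ψ * g := fun g => Subgroup.mem_center_iff.mp hψ g
    have hxr : ∀ x : N, (ψ • r) * x = ψ • (r * x) := by
      intro x
      by_cases h0 : x = 0
      · rw [h0, hd0, hd0, smul_zero]
      by_cases hm : S.rep x ∈ S.M
      · rw [S.mul_zm (ψ • r) x h0 hm, S.mul_zm r x h0 hm, smul_zero]
      · rw [S.mul_eq (ψ • r) x h0 hm, S.mul_eq r x h0 hm, smul_smul, smul_smul,
          hcomm (S.aut x)]
    have : ∀ a b : N, (ψ • r) * (a + b) = (ψ • r) * a + (ψ • r) * b := by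
      intro a b
      rw [hxr, hxr, hxr, hrD a b, smul_add]
    exact this
end

section
/- Let N be a planar nearring and d ∈ D(N) a distributive element that is not a zero multiplier. Then dΦ* = dΦ ∪ {0} with the induced addition and multiplication from N is a planar nearfield with multiplicative identity r_d. -/

lemma rn_zero_mul {N : Type*} [RightNearring N] (a : N) : (0 : N) * a = 0 := by
  have h := RightNearring.right_distrib (0 : N) 0 a
  rw [add_zero] at h
  exact left_eq_add.mp h

lemma pn_mul_zero {N : Type*} [PlanarNearring N] (x : N) : x * (0 : N) = 0 := by
  obtain ⟨a, b, c, hab, _, _⟩ := PlanarNearring.three_classes (N := N)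
  have h0u : ∀ u : N, (x * 0) * u = x * 0 := fun u => by
    rw [RightNearring.mul_assoc, rn_zero_mul]
  obtain ⟨w, hw, huniq⟩ := PlanarNearring.planar a b 0 hab
  have h1 : (x * 0) * a = (x * 0) * b + 0 := by rw [h0u, h0u, add_zero]
  have h2 : (0 : N) * a = (0 : N) * b + 0 := by rw [rn_zero_mul, rn_zero_mul, add_zero]
  exact (huniq _ h1).trans (huniq _ h2).symm

/-- if `d` is a distributive non zero multiplier then `dΦ* = dΦ ∪ {0}` is a
planar nearfield (under the induced operations) with multiplicative identity `r_d`. -/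
theorem stmt7 {Φ N : Type*} [Group Φ] [PlanarNearring N] [DistribMulAction Φ N]
    (S : FerreroStructure Φ N) (d : N) (hd : d ∈ DSet N) (hnz : d ∉ ZM N) :
    -- `dΦ*` is additively closed, with negatives, and multiplicatively closed:
    (∀ x ∈ orbitZ Φ d, ∀ y ∈ orbitZ Φ d, x + y ∈ orbitZ Φ d) ∧
    (∀ x ∈ orbitZ Φ d, -x ∈ orbitZ Φ d) ∧
    (∀ x ∈ orbitZ Φ d, ∀ y ∈ orbitZ Φ d, x * y ∈ orbitZ Φ d) ∧
    -- `r_d` is a two-sided multiplicative identity: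
    S.rep d ∈ orbitZ Φ d ∧
    (∀ x ∈ orbitZ Φ d, x * S.rep d = x ∧ S.rep d * x = x) ∧
    -- nonzero elements have multiplicative inverses:
    (∀ x ∈ orbitZ Φ d, x ≠ 0 →
      ∃ y ∈ orbitZ Φ d, y ≠ 0 ∧ x * y = S.rep d ∧ y * x = S.rep d) ∧
    -- planarity of the induced nearring:
    (∃ a ∈ orbitZ Φ d, ∃ b ∈ orbitZ Φ d, ∃ c ∈ orbitZ Φ d,
      ¬ (∀ x ∈ orbitZ Φ d, x * a = x * b) ∧ ¬ (∀ x ∈ orbitZ Φ d, x * b = x * c) ∧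
      ¬ (∀ x ∈ orbitZ Φ d, x * a = x * c)) ∧
    (∀ a ∈ orbitZ Φ d, ∀ b ∈ orbitZ Φ d, ∀ c ∈ orbitZ Φ d,
      ¬ (∀ x ∈ orbitZ Φ d, x * a = x * b) →
        ∃! x : N, x ∈ orbitZ Φ d ∧ x * a = x * b + c)  := by
  have hd0 : d ≠ 0 := fun h => hnz (fun a => by rw [h]; exact pn_mul_zero a)
  have hrM : S.rep d ∉ S.M := fun hM => hnz (fun a => S.mul_zm a d hd0 hM)
  have hrep0 : S.rep d ≠ 0 := fun h => S.zero_not_mem (h ▸ S.rep_mem d hd0)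
  have horb0 : ∀ φ : Φ, φ • d ≠ 0 := fun φ h =>
    hd0 (by rw [← inv_smul_smul φ d, h, smul_zero])
  have hrepφ : ∀ φ : Φ, S.rep d = S.rep (φ • d) ∧ φ * S.aut d = S.aut (φ • d) :=
    fun φ => S.unique (φ • d) (horb0 φ) (S.rep d) (S.rep_mem d hd0) (φ * S.aut d)
      (by rw [mul_smul, S.decomp d hd0])
  have hmul : ∀ (a : N) (φ : Φ), a * (φ • d) = (φ * S.aut d) • a := fun a φ => by
    rw [S.mul_eq a _ (horb0 φ) (by rw [← (hrepφ φ).1]; exact hrM), ← (hrepφ φ).2]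
  have hmem : ∀ y : N, d * y ∈ orbitZ Φ d := by
    intro y
    by_cases hy : y = 0
    · left; rw [hy]; exact pn_mul_zero d
    by_cases hM : S.rep y ∈ S.M
    · left; exact S.mul_zm d y hy hM
    · right; exact ⟨S.aut y, (S.mul_eq d y hy hM).symm⟩
  have hsurj : ∀ x ∈ orbitZ Φ d, ∃ y, d * y = x := by
    rintro x (rfl | ⟨φ, rfl⟩)
    · exact ⟨0, pn_mul_zero d⟩
    · refine ⟨φ • S.rep d, ?_⟩
      have hy0 : φ • S.rep d ≠ 0 := fun h =>
        hrep0 (by rw [← inv_smul_smul φ (S.rep d), h, smul_zero])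
      have h := S.unique _ hy0 (S.rep d) (S.rep_mem d hd0) φ rfl
      rw [S.mul_eq d _ hy0 (by rw [← h.1]; exact hrM), ← h.2]
  have hneg : ∀ u : N, d * (-u) = -(d * u) := fun u => by
    have : d * u + d * (-u) = 0 := by rw [← hd u (-u), add_neg_cancel]; exact pn_mul_zero d
    exact (neg_eq_of_add_eq_zero_right this).symm
  have hr : (S.aut d)⁻¹ • d = S.rep d := by
    rw [inv_smul_eq_iff]; exact (S.decomp d hd0).symm
  have hid : ∀ x : N, x * S.rep d = x := by
    intro x
    have h := S.unique (S.rep d) hrep0 (S.rep d) (S.rep_mem d hd0) 1 (one_smul _ _)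
    rw [S.mul_eq x _ hrep0 (by rw [← h.1]; exact hrM), ← h.2, one_smul]
  refine ⟨?_, ?_, ?_, Or.inr ⟨(S.aut d)⁻¹, hr⟩, ?_, ?_, ?_, ?_⟩
  · intro x hx y hy
    obtain ⟨u, rfl⟩ := hsurj x hx
    obtain ⟨v, rfl⟩ := hsurj y hy
    rw [← hd u v]; exact hmem _
  · intro x hx
    obtain ⟨u, rfl⟩ := hsurj x hx
    rw [← hneg u]; exact hmem _
  · intro x hx y hy
    obtain ⟨u, rfl⟩ := hsurj x hx
    rw [RightNearring.mul_assoc]; exact hmem _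
  · intro x hx
    refine ⟨hid x, ?_⟩
    rcases hx with rfl | ⟨φ, rfl⟩
    · exact pn_mul_zero _
    · rw [hmul, mul_smul, S.decomp d hd0]
  · rintro x (rfl | ⟨φ, rfl⟩) hx0
    · exact absurd rfl hx0
    refine ⟨(S.aut d * φ * S.aut d)⁻¹ • d, Or.inr ⟨_, rfl⟩, horb0 _, ?_, ?_⟩
    · rw [hmul, smul_smul]
      have : (S.aut d * φ * S.aut d)⁻¹ * S.aut d * φ = (S.aut d)⁻¹ := by group
      rw [this, hr]
    · rw [hmul, smul_smul]
      have : φ * S.aut d * (S.aut d * φ * S.aut d)⁻¹ = (S.aut d)⁻¹ := by group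
      rw [this, hr]
  · have hΦ : ∃ ψ : Φ, ψ ≠ 1 := by
      by_contra h
      push_neg at h
      have key : ∀ m : N, (∀ x : N, x * m = 0) ∨ (∀ x : N, x * m = x) := by
        intro m
        by_cases hm : m = 0
        · left; intro x; rw [hm]; exact pn_mul_zero x
        by_cases hM : S.rep m ∈ S.M
        · left; intro x; exact S.mul_zm x m hm hM
        · right; intro x; rw [S.mul_eq x m hm hM, h (S.aut m), one_smul]
      obtain ⟨a, b, c, hab, hbc, hac⟩ := PlanarNearring.three_classes (N := N)
      rcases key a with ha | ha <;> rcases key b with hb | hb <;>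
        rcases key c with hc | hc
      · exact hab fun x => (ha x).trans (hb x).symm
      · exact hab fun x => (ha x).trans (hb x).symm
      · exact hac fun x => (ha x).trans (hc x).symm
      · exact hbc fun x => (hb x).trans (hc x).symm
      · exact hbc fun x => (hb x).trans (hc x).symm
      · exact hac fun x => (ha x).trans (hc x).symm
      · exact hab fun x => (ha x).trans (hb x).symm
      · exact hab fun x => (ha x).trans (hb x).symm
    obtain ⟨ψ, hψ⟩ := hΦ
    have hdm : d ∈ orbitZ Φ d := Or.inr ⟨1, one_smul _ _⟩
    have hdc : ∀ x : N, x * ((ψ * (S.aut d)⁻¹) • d) = ψ • x := fun x => by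
      rw [hmul]
      congr 1
      group
    refine ⟨0, Or.inl rfl, S.rep d, Or.inr ⟨(S.aut d)⁻¹, hr⟩,
      (ψ * (S.aut d)⁻¹) • d, Or.inr ⟨_, rfl⟩, ?_, ?_, ?_⟩
    · intro h
      have h2 := h d hdm
      rw [pn_mul_zero, hid] at h2
      exact hd0 h2.symm
    · intro h
      have h2 := h d hdm
      rw [hid, hdc] at h2
      exact hd0 (S.fpf ψ hψ d h2.symm)
    · intro h
      have h2 := h d hdm
      rw [pn_mul_zero, hdc] at h2
      exact horb0 ψ h2.symm
  · intro a ha b hb c hc hne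
    have hne' : ¬ EquivMult a b := by
      push_neg at hne
      obtain ⟨x, hx, hxne⟩ := hne
      exact fun h => hxne (h x)
    obtain ⟨y, rfl⟩ := hsurj c hc
    obtain ⟨x', hx', hux⟩ := PlanarNearring.planar a b y hne'
    have hsol : (d * x') * a = (d * x') * b + d * y := by
      rw [RightNearring.mul_assoc, hx', hd, ← RightNearring.mul_assoc]
    refine ⟨d * x', ⟨hmem x', hsol⟩, ?_⟩
    rintro z ⟨hz, hzeq⟩
    obtain ⟨w, hw, huw⟩ := PlanarNearring.planar a b (d * y) hne'
    exact (huw z hzeq).trans (huw (d * x') hsol).symm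
end

section
/- Let N be a planar nearring with a nonzero distributive element. Then for every zero multiplier m and every non-zero-multiplier a ∈ N, the elements m + a and a are equivalent multipliers, i.e., φ_{m+a} = φ_a. -/
/-!
Multiplying by a nonzero distributive element `d` on the left separates the multipliers:
since `m` is a zero multiplier, `d * (m + a) = d * m + d * a = d * a = φ_a d ≠ 0`. Hence `m + a`
is not a zero multiplier either, so `d * (m + a) = φ_{m+a} d`, and fixed point freeness of `Φ`
turns `φ_{m+a} d = φ_a d` into `φ_{m+a} = φ_a`.
-/

namespace RightNearring

variable {N : Type*} [RightNearring N]

theorem zero_mul (x : N) : (0 : N) * x = 0 := by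
  have h := right_distrib (0 : N) 0 x
  rwa [add_zero, left_eq_add] at h

theorem mul_add_of_mem_DSet {d : N} (hd : d ∈ DSet N) {m : N} (hm : m ∈ ZM N) (a : N) :
    d * (m + a) = d * a := by
  rw [hd m a, hm d, zero_add]

end RightNearring

namespace PlanarNearring

variable {N : Type*} [PlanarNearring N]

/-- Planar nearrings are zero symmetric: `x * 0` and `0` both solve `y * p = y * q + 0`. -/
theorem mul_zero (x : N) : x * (0 : N) = 0 := by
  obtain ⟨p, q, -, hpq, -, -⟩ := three_classes (N := N)
  obtain ⟨_, -, huniq⟩ := planar p q (0 : N) hpq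
  have h0 : (0 : N) * p = 0 * q + 0 := by
    rw [RightNearring.zero_mul, RightNearring.zero_mul, add_zero]
  have hx : (x * 0) * p = (x * 0) * q + 0 := by
    rw [RightNearring.mul_assoc, RightNearring.mul_assoc, RightNearring.zero_mul,
      RightNearring.zero_mul, add_zero]
  rw [huniq _ hx, huniq _ h0]

theorem ne_zero_of_notMem_ZM {a : N} (ha : a ∉ ZM N) : a ≠ 0 := by
  rintro rfl
  exact ha mul_zero

end PlanarNearring

namespace FerreroStructure

variable {Φ N : Type*} [Group Φ] [PlanarNearring N] [DistribMulAction Φ N]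

theorem rep_notMem_M (S : FerreroStructure Φ N) {a : N} (ha : a ∉ ZM N) : S.rep a ∉ S.M :=
  fun hM => ha fun x => S.mul_zm x a (PlanarNearring.ne_zero_of_notMem_ZM ha) hM

theorem mul_eq_aut_smul (S : FerreroStructure Φ N) {a : N} (ha : a ∉ ZM N) (x : N) :
    x * a = S.aut a • x :=
  S.mul_eq x a (PlanarNearring.ne_zero_of_notMem_ZM ha) (S.rep_notMem_M ha)

theorem smul_left_injective (S : FerreroStructure Φ N) {d : N} (hd : d ≠ 0) :
    Function.Injective (· • d : Φ → N) := by
  intro φ ψ h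
  by_contra hne
  refine hd (S.fpf (ψ⁻¹ * φ) ?_ d ?_)
  · rwa [Ne, inv_mul_eq_one, eq_comm]
  · rw [mul_smul, inv_smul_eq_iff]
    exact h

theorem notMem_ZM_of_mul_eq (S : FerreroStructure Φ N) {a b d : N} (ha : a ∉ ZM N) (hd : d ≠ 0)
    (h : d * b = d * a) : b ∉ ZM N := fun hb => by
  rw [hb d, S.mul_eq_aut_smul ha, eq_comm, smul_eq_zero_iff_eq] at h
  exact hd h

theorem aut_eq_of_mul_eq (S : FerreroStructure Φ N) {a b d : N} (ha : a ∉ ZM N) (hb : b ∉ ZM N)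
    (hd : d ≠ 0) (h : d * b = d * a) : S.aut b = S.aut a := by
  rw [S.mul_eq_aut_smul ha, S.mul_eq_aut_smul hb] at h
  exact S.smul_left_injective hd h

theorem equivMult_of_aut_eq (S : FerreroStructure Φ N) {a b : N} (ha : a ∉ ZM N)
    (hb : b ∉ ZM N) (h : S.aut b = S.aut a) : EquivMult b a := fun x => by
  rw [S.mul_eq_aut_smul ha, S.mul_eq_aut_smul hb, h]

end FerreroStructure

/-- if `N` has a nonzero distributive element then for every zero multiplier
`m` and every non zero multiplier `a`, `m + a` and `a` are equivalent multipliers,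
i.e. `φ_{m+a} = φ_a`. -/
theorem stmt8 {Φ N : Type*} [Group Φ] [PlanarNearring N] [DistribMulAction Φ N]
    (S : FerreroStructure Φ N) (hD : ∃ d ∈ DSet N, d ≠ 0)
    (m a : N) (hm : m ∈ ZM N) (ha : a ∉ ZM N) :
    EquivMult (m + a) a ∧ m + a ≠ 0 ∧ S.aut (m + a) = S.aut a := by
  obtain ⟨d, hd, hd0⟩ := hD
  have hdma : d * (m + a) = d * a := RightNearring.mul_add_of_mem_DSet hd hm a
  have hma : m + a ∉ ZM N := S.notMem_ZM_of_mul_eq ha hd0 hdma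
  have haut : S.aut (m + a) = S.aut a := S.aut_eq_of_mul_eq ha hma hd0 hdma
  exact ⟨S.equivMult_of_aut_eq ha hma haut, PlanarNearring.ne_zero_of_notMem_ZM hma, haut⟩
end

section
/- Let N be a planar nearring with a nonzero distributive element d. Then the map ρ : N → N, ρ(n) = d * n, is an additive group homomorphism whose kernel is exactly the set of zero multipliers. -/
lemma zero_mul' {N : Type*} [PlanarNearring N] (a : N) : (0 : N) * a = 0 := by
  have h := RightNearring.right_distrib (0 : N) 0 a
  rw [add_zero] at h
  have h2 : (0:N)*a + 0 = 0*a + 0*a := by rw [add_zero]; exact h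
  exact (add_left_cancel h2).symm

lemma mul_zero' {N : Type*} [PlanarNearring N] (n : N) : n * (0 : N) = 0 := by
  obtain ⟨a, b, c, hab, _, _⟩ := PlanarNearring.three_classes (N := N)
  obtain ⟨x, hx, hu⟩ := PlanarNearring.planar a b 0 hab
  have h0 : (0 : N) * a = 0 * b + 0 := by rw [zero_mul', zero_mul', add_zero]
  have hm : (n * 0) * a = (n * 0) * b + 0 := by
    rw [RightNearring.mul_assoc, RightNearring.mul_assoc, zero_mul', zero_mul', add_zero]
  rw [hu _ hm, hu _ h0]

/-- for a nonzero distributive element `d`, the map `n ↦ d * n` is an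
additive group homomorphism whose kernel is exactly the set of zero multipliers. -/
theorem stmt10 {Φ N : Type*} [Group Φ] [PlanarNearring N] [DistribMulAction Φ N]
    (S : FerreroStructure Φ N) (d : N) (hd : d ∈ DSet N) (hd0 : d ≠ 0) :
    (∀ n m : N, d * (n + m) = d * n + d * m) ∧
    (∀ n : N, d * n = 0 ↔ n ∈ ZM N) := by
  refine ⟨fun n m => hd n m, fun n => ⟨fun h => ?_, fun h => h d⟩⟩
  by_cases hn : n = 0
  · subst hn; intro a; exact mul_zero' a
  · by_cases hM : S.rep n ∈ S.M
    · intro a; exact S.mul_zm a n hn hM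
    · exfalso
      rw [S.mul_eq d n hn hM] at h
      apply hd0
      have := congrArg (fun x => (S.aut n)⁻¹ • x) h
      simpa using this
end

section
/- Let N be a planar nearring possessing a distributive element d that is not a zero multiplier. Then there exists a subnearfield F ≤ N with F* isomorphic to Φ and an additive group K on which Φ acts by fixed point free automorphisms, such that (N,+) ≅ K ⋊ F as additive groups, with multiplication (a,b)*(c,e) = 0 if e = 0 and (aφ_e, bφ_e) otherwise, giving a nearring isomorphism; moreover the zero multipliers form the ideal K × {0}. -/
section Aux

variable {Φ N : Type*} [Group Φ] [PlanarNearring N] [DistribMulAction Φ N]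

lemma zmul' (c : N) : (0 : N) * c = 0 := by
  have h := RightNearring.right_distrib (0:N) 0 c
  rw [add_zero] at h
  nth_rewrite 1 [← add_zero ((0:N) * c)] at h
  exact (add_left_cancel h).symm

lemma negmul' (a c : N) : (-a) * c = -(a * c) := by
  have h := RightNearring.right_distrib a (-a) c
  rw [add_neg_cancel, zmul'] at h
  exact eq_neg_of_add_eq_zero_right h.symm

lemma smul_ne' {φ : Φ} {x : N} (hx : x ≠ 0) : φ • x ≠ 0 := by
  intro h0
  apply hx
  have := congrArg (fun y => φ⁻¹ • y) h0
  simpa using this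

lemma fpf_inj' (S : FerreroStructure Φ N) {x : N} (hx : x ≠ 0) {φ ψ : Φ}
    (h : φ • x = ψ • x) : φ = ψ := by
  by_contra hne
  have h1 : ψ⁻¹ * φ ≠ 1 := by
    intro he
    exact hne (by rw [← one_mul φ, ← mul_inv_cancel ψ, mul_assoc, he, mul_one])
  have h2 : (ψ⁻¹ * φ) • x = x := by rw [mul_smul, h, inv_smul_smul]
  exact hx (S.fpf _ h1 x h2)

lemma smul_rep' (S : FerreroStructure Φ N) (φ : Φ) {x : N} (hx : x ≠ 0) :
    S.rep (φ • x) = S.rep x ∧ S.aut (φ • x) = φ * S.aut x := by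
  have h := S.unique (φ • x) (smul_ne' hx) (S.rep x) (S.rep_mem x hx) (φ * S.aut x)
    (by rw [mul_smul, S.decomp x hx])
  exact ⟨h.1.symm, h.2.symm⟩

lemma mul_zero'_s11 (S : FerreroStructure Φ N) : ∀ a : N, a * 0 = 0 := by
  intro a
  by_contra hz
  set z := a * 0 with hzdef
  have hz0 : z ≠ 0 := hz
  have hzb : ∀ b : N, z * b = z := by
    intro b
    calc z * b = a * (0 * b) := RightNearring.mul_assoc a 0 b
    _ = a * 0 := by rw [zmul']
  have hnoM : ∀ b : N, b ≠ 0 → S.rep b ∉ S.M := by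
    intro b hb hbM
    exact hz0 (by rw [← hzb b, S.mul_zm z b hb hbM])
  have haut1 : ∀ b : N, b ≠ 0 → S.aut b = 1 := by
    intro b hb
    have h1 : S.aut b • z = z := by rw [← S.mul_eq z b hb (hnoM b hb), hzb]
    by_contra hne
    exact hz0 (S.fpf _ hne z h1)
  have hΦ1 : ∀ φ : Φ, φ = 1 := by
    intro φ
    have h1 := (smul_rep' S φ hz0).2
    rw [haut1 _ (smul_ne' hz0), haut1 z hz0, mul_one] at h1
    exact h1.symm
  obtain ⟨p, q, r, hpq, hqr, hpr⟩ := PlanarNearring.three_classes (N := N)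
  have hequiv : ∀ b c : N, b ≠ 0 → c ≠ 0 → EquivMult b c := by
    intro b c hb hc x
    rw [S.mul_eq x b hb (hnoM b hb), S.mul_eq x c hc (hnoM c hc),
      hΦ1 (S.aut b), hΦ1 (S.aut c)]
  by_cases hp : p = 0
  · have hq : q ≠ 0 := fun h => hpq (by rw [hp, h]; exact fun _ => rfl)
    have hr : r ≠ 0 := fun h => hpr (by rw [hp, h]; exact fun _ => rfl)
    exact hqr (hequiv q r hq hr)
  · by_cases hq : q = 0
    · have hr : r ≠ 0 := fun h => hqr (by rw [hq, h]; exact fun _ => rfl)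
      exact hpr (hequiv p r hp hr)
    · exact hpq (hequiv p q hp hq)

end Aux

/-- if `N` has a distributive element that is not a zero multiplier, then
`N` is (additively) an internal semidirect product `K ⋊ F` of the ideal `K` of zero
multipliers with a subnearfield `F` whose nonzero elements are isomorphic to `Φ`,
`Φ` acts fixed point freely on `K`, and the multiplication is given by
`x * (k + f) = 0` if `f = 0` and `x * (k + f) = x φ_f` otherwise. -/
theorem stmt11 {Φ N : Type*} [Group Φ] [PlanarNearring N] [DistribMulAction Φ N]
    (S : FerreroStructure Φ N) (d : N) (hd : d ∈ DSet N) (hnz : d ∉ ZM N) :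
    ∃ F K : AddSubgroup N,
      -- `K` is the set of zero multipliers:
      (K : Set N) = ZM N ∧
      -- internal semidirect product `K ⋊ F`:
      (∀ n : N, ∀ k ∈ K, n + k - n ∈ K) ∧ K ⊓ F = ⊥ ∧ K ⊔ F = ⊤ ∧
      -- `Φ` leaves `K` invariant (acting on it by fixed point free automorphisms):
      (∀ φ : Φ, ∀ k ∈ K, φ • k ∈ K) ∧
      -- `F` is a subnearfield with `F* ≅ Φ`:
      (∀ x ∈ F, ∀ y ∈ F, x * y ∈ F) ∧
      (∃ ι : Φ → N, Function.Injective ι ∧ Set.range ι = (F : Set N) \ {0} ∧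
        ∀ φ ψ : Φ, ι (φ * ψ) = ι φ * ι ψ) ∧
      -- the multiplication, on `(k,f) ∈ K ⋊ F`:
      (∀ x : N, ∀ k ∈ K, x * k = 0) ∧
      (∀ x : N, ∀ k ∈ K, ∀ f ∈ F, f ≠ 0 → x * (k + f) = S.aut f • x) ∧
      -- `K` is an ideal:
      (∀ k ∈ K, ∀ n : N, k * n ∈ K) ∧
      (∀ k ∈ K, ∀ n m : N, n * m - n * (m + k) ∈ K) := by
  
  classical
  have hd0 : d ≠ 0 := by
    intro h
    exact hnz (fun a => by rw [h]; exact mul_zero'_s11 S a)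
  have hdM : S.rep d ∉ S.M := by
    intro hM
    exact hnz (fun a => S.mul_zm a d hd0 hM)
  have zm_iff : ∀ b : N, b ∈ ZM N ↔ (b = 0 ∨ S.rep b ∈ S.M) := by
    intro b
    constructor
    · intro hb
      by_cases h0 : b = 0
      · exact Or.inl h0
      · by_contra hcon
        push_neg at hcon
        have h1 : d * b = S.aut b • d := S.mul_eq d b h0 (hcon.2)
        have h2 : d * b = 0 := hb d
        exact smul_ne' (φ := S.aut b) hd0 (by rw [← h1, h2])
    · rintro (rfl | hM)
      · exact fun a => mul_zero'_s11 S a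
      · by_cases h0 : b = 0
        · exact h0 ▸ fun a => mul_zero'_s11 S a
        · exact fun a => S.mul_zm a b h0 hM
  have notZM : ∀ x : N, x ∉ ZM N → x ≠ 0 ∧ S.rep x ∉ S.M := by
    intro x hx
    rw [zm_iff] at hx
    push_neg at hx
    exact hx
  have lam_eq : ∀ x : N, x ∉ ZM N → d * x = S.aut x • d := fun x hx =>
    S.mul_eq d x (notZM x hx).1 (notZM x hx).2
  have lam_zero_iff : ∀ x : N, d * x = 0 ↔ x ∈ ZM N := by
    intro x
    constructor
    · intro h
      by_contra hx
      exact smul_ne' (φ := S.aut x) hd0 (by rw [← lam_eq x hx, h])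
    · intro hx; exact hx d
  have lam_add : ∀ a b : N, d * (a + b) = d * a + d * b := hd
  have lam_neg : ∀ a : N, d * (-a) = -(d * a) := by
    intro a
    have h := hd a (-a)
    rw [add_neg_cancel, mul_zero'_s11 S] at h
    exact eq_neg_of_add_eq_zero_right h.symm
  -- the subgroup of zero multipliers
  let K : AddSubgroup N :=
    { carrier := ZM N
      zero_mem' := fun a => mul_zero'_s11 S a
      add_mem' := by
        intro a b ha hb
        exact (lam_zero_iff _).mp (by rw [lam_add, ha d, hb d, add_zero])
      neg_mem' := by
        intro a ha
        exact (lam_zero_iff _).mp (by rw [lam_neg, ha d, neg_zero]) }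
  have hKmem : ∀ x : N, x ∈ K ↔ x ∈ ZM N := fun x => Iff.rfl
  -- orbit = image of left multiplication by d
  have repd0 : S.rep d ≠ 0 := fun h => S.zero_not_mem (h ▸ S.rep_mem d hd0)
  have orbit_im : ∀ x : N, (x ∈ orbitZ Φ d) ↔ ∃ u : N, d * u = x := by
    intro x
    constructor
    · rintro (rfl | ⟨φ, rfl⟩)
      · exact ⟨0, mul_zero'_s11 S d⟩
      · refine ⟨φ • S.rep d, ?_⟩
        have hu0 : φ • S.rep d ≠ 0 := smul_ne' repd0
        obtain ⟨hr, ha⟩ := S.unique (φ • S.rep d) hu0 (S.rep d) (S.rep_mem d hd0) φ rfl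
        have hM : S.rep (φ • S.rep d) ∉ S.M := hr ▸ hdM
        rw [S.mul_eq d _ hu0 hM, ← ha]
    · rintro ⟨u, rfl⟩
      by_cases hu : u ∈ ZM N
      · exact Or.inl (hu d)
      · exact Or.inr ⟨S.aut u, (lam_eq u hu).symm⟩
  let F : AddSubgroup N :=
    { carrier := orbitZ Φ d
      zero_mem' := Or.inl rfl
      add_mem' := by
        intro a b ha hb
        obtain ⟨u, hu⟩ := (orbit_im a).mp ha
        obtain ⟨v, hv⟩ := (orbit_im b).mp hb
        exact (orbit_im _).mpr ⟨u + v, by rw [lam_add, hu, hv]⟩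
      neg_mem' := by
        intro a ha
        obtain ⟨u, hu⟩ := (orbit_im a).mp ha
        exact (orbit_im _).mpr ⟨-u, by rw [lam_neg, hu]⟩ }
  have hFmem : ∀ x : N, x ∈ F ↔ (x = 0 ∨ ∃ φ : Φ, φ • d = x) := fun x => Iff.rfl
  -- nonzero elements of F are not zero multipliers, and their rep/aut
  have orb_aut : ∀ φ : Φ, S.rep (φ • d) = S.rep d ∧ S.aut (φ • d) = φ * S.aut d :=
    fun φ => smul_rep' S φ hd0
  have FnotZM : ∀ f : N, f ∈ F → f ≠ 0 → f ∉ ZM N := by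
    intro f hf hf0 hfZ
    rcases (hFmem f).mp hf with rfl | ⟨φ, rfl⟩
    · exact hf0 rfl
    · rcases (zm_iff _).mp hfZ with h | h
      · exact hf0 h
      · exact hdM ((orb_aut φ).1 ▸ h)
  -- shifting by a zero multiplier does not change the multiplier behaviour
  have shift : ∀ k ∈ ZM N, ∀ m : N, m ∉ ZM N →
      (k + m ∉ ZM N ∧ S.aut (k + m) = S.aut m) := by
    intro k hk m hm
    have h1 : d * (k + m) = d * m := by rw [lam_add, hk d, zero_add]
    have h2 : k + m ∉ ZM N := by
      intro hc
      exact hm ((lam_zero_iff m).mp (by rw [← h1]; exact hc d))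
    refine ⟨h2, ?_⟩
    have h3 : S.aut (k + m) • d = S.aut m • d := by
      rw [← lam_eq _ h2, ← lam_eq _ hm, h1]
    exact fpf_inj' S hd0 h3
  refine ⟨F, K, rfl, ?_, ?_, ?_, ?_, ?_, ?_, ?_, ?_, ?_, ?_⟩
  · -- normality of K
    intro n k hk
    refine (hKmem _).mpr ((lam_zero_iff _).mp ?_)
    rw [sub_eq_add_neg, lam_add, lam_add, hk d, lam_neg, add_zero, add_neg_cancel]
  · -- K ⊓ F = ⊥
    rw [eq_bot_iff]
    rintro x hx
    rw [AddSubgroup.mem_inf] at hx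
    rcases (hFmem x).mp hx.2 with rfl | ⟨φ, rfl⟩
    · exact AddSubgroup.zero_mem ⊥
    · exact absurd ((hKmem _).mp hx.1) (FnotZM _ hx.2 (smul_ne' hd0))
  · -- K ⊔ F = ⊤
    rw [eq_top_iff]
    rintro n -
    by_cases hn : n ∈ ZM N
    · exact AddSubgroup.mem_sup_left hn
    · set f : N := (S.aut n * (S.aut d)⁻¹) • d with hf
      have hfF : f ∈ F := (hFmem f).mpr (Or.inr ⟨_, rfl⟩)
      have hfnZ : f ∉ ZM N := FnotZM f hfF (smul_ne' hd0)
      have hautf : S.aut f = S.aut n := by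
        rw [hf, (orb_aut _).2, inv_mul_cancel_right]
      have hnf : n - f ∈ K := by
        refine (hKmem _).mpr ((lam_zero_iff _).mp ?_)
        rw [sub_eq_add_neg, lam_add, lam_neg, lam_eq _ hfnZ, hautf, lam_eq _ hn,
          add_neg_cancel]
      have := add_mem (AddSubgroup.mem_sup_left (S := K) (T := F) hnf)
        (AddSubgroup.mem_sup_right (S := K) (T := F) hfF)
      simpa [sub_add_cancel] using this
  · -- Φ-invariance of K
    intro φ k hk
    refine (hKmem _).mpr ((zm_iff _).mpr ?_)
    by_cases hk0 : k = 0
    · exact Or.inl (by rw [hk0, smul_zero])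
    · rcases (zm_iff k).mp ((hKmem k).mp hk) with h | h
      · exact absurd h hk0
      · exact Or.inr ((smul_rep' S φ hk0).1 ▸ h)
  · -- multiplicative closure of F
    intro x hx y hy
    by_cases hy0 : y = 0
    · rw [hy0, mul_zero'_s11 S]; exact F.zero_mem
    · have hynZ : y ∉ ZM N := FnotZM y hy hy0
      rw [S.mul_eq x y (notZM y hynZ).1 (notZM y hynZ).2]
      rcases (hFmem x).mp hx with rfl | ⟨φ, rfl⟩
      · rw [smul_zero]; exact F.zero_mem
      · exact (hFmem _).mpr (Or.inr ⟨S.aut y * φ, (mul_smul _ _ _)⟩)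
  · -- the embedding of Φ
    refine ⟨fun φ => ((S.aut d)⁻¹ * φ⁻¹) • d, ?_, ?_, ?_⟩
    · intro φ ψ h
      have h1 := fpf_inj' S hd0 h
      have h2 := mul_left_cancel h1
      exact inv_injective h2
    · ext x
      constructor
      · rintro ⟨φ, rfl⟩
        exact ⟨(hFmem _).mpr (Or.inr ⟨_, rfl⟩), smul_ne' hd0⟩
      · rintro ⟨hxF, hx0⟩
        simp only [Set.mem_singleton_iff] at hx0
        rcases (hFmem x).mp hxF with rfl | ⟨φ, rfl⟩
        · exact absurd rfl hx0
        · refine ⟨φ⁻¹ * (S.aut d)⁻¹, ?_⟩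
          show ((S.aut d)⁻¹ * (φ⁻¹ * (S.aut d)⁻¹)⁻¹) • d = φ • d
          congr 1
          group
    · intro φ ψ
      have hψ0 : ((S.aut d)⁻¹ * ψ⁻¹) • d ≠ 0 := smul_ne' hd0
      have hψM : S.rep (((S.aut d)⁻¹ * ψ⁻¹) • d) ∉ S.M := (orb_aut _).1 ▸ hdM
      rw [S.mul_eq _ _ hψ0 hψM, (orb_aut _).2, ← mul_smul]
      group
  · -- multiplication by elements of K
    intro x k hk
    exact ((hKmem k).mp hk) x
  · -- multiplication by k + f
    intro x k hk f hf hf0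
    have hfnZ : f ∉ ZM N := FnotZM f hf hf0
    obtain ⟨h1, h2⟩ := shift k ((hKmem k).mp hk) f hfnZ
    rw [S.mul_eq x (k + f) (notZM _ h1).1 (notZM _ h1).2, h2]
  · -- K is closed under right multiplication
    intro k hk n
    by_cases hn0 : n = 0
    · rw [hn0, mul_zero'_s11 S]; exact K.zero_mem
    · by_cases hnM : S.rep n ∈ S.M
      · rw [S.mul_zm k n hn0 hnM]; exact K.zero_mem
      · rw [S.mul_eq k n hn0 hnM]
        refine (hKmem _).mpr ((zm_iff _).mpr ?_)
        by_cases hk0 : k = 0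
        · exact Or.inl (by rw [hk0, smul_zero])
        · rcases (zm_iff k).mp ((hKmem k).mp hk) with h | h
          · exact absurd h hk0
          · exact Or.inr ((smul_rep' S (S.aut n) hk0).1 ▸ h)
  · -- left "ideal" property
    intro k hk n m
    have hmm : n * (m + k) = n * m := by
      by_cases hm : m ∈ ZM N
      · have hmk : m + k ∈ ZM N := (hKmem _).mp (add_mem ((hKmem m).mpr hm) hk)
        rw [hmk n, hm n]
      · have hk' : k ∈ ZM N := (hKmem k).mp hk
        have h1 : d * (m + k) = d * m := by rw [lam_add, hk' d, add_zero]
        have h2 : m + k ∉ ZM N := by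
          intro hc
          exact hm ((lam_zero_iff m).mp (by rw [← h1]; exact hc d))
        have h3 : S.aut (m + k) = S.aut m :=
          fpf_inj' S hd0 (by rw [← lam_eq _ h2, ← lam_eq _ hm, h1])
        rw [S.mul_eq n (m + k) (notZM _ h2).1 (notZM _ h2).2, h3,
          S.mul_eq n m (notZM _ hm).1 (notZM _ hm).2]
    rw [hmm, sub_self]
    exact K.zero_mem
end

section
/- Let p be an odd prime and N = Z_{p^2}. Let Φ be the cyclic subgroup of order p-1 of the multiplicative units of Z_{p^2} (acting by multiplication), take the orbit pZ_{p^2} as zero multipliers with representative p, and choose the remaining orbit representatives to form a coset of pZ_{p^2}. Then the resulting structure (N,+,*) is a planar nearring whose distributive elements are exactly D(N) = pZ_{p^2}, all of which are zero multipliers. -/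
/-- Auxiliary: in a commutative ring, if `a * a = 0` then `(1 + a)^n = 1 + n * a`. -/
lemma aux_one_add_sq_zero_pow {A : Type*} [CommRing A] (a : A) (h : a * a = 0) :
    ∀ n : ℕ, (1 + a) ^ n = 1 + (n : A) * a := by
  intro n
  induction n with
  | zero => simp
  | succ n ih =>
    have : (1 + (n : A) * a) * (1 + a) = 1 + ((n : A) + 1) * a + (n : A) * (a * a) := by ring
    rw [pow_succ, ih, this, h, mul_zero, add_zero]
    push_cast; ring

/-- the example on `ℤ_{p²}` (`p` an odd prime): `Φ` the cyclic subgroup of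
order `p-1` of the units, the orbit `pℤ_{p²}` as zero multipliers with representative `p`,
the remaining representatives a coset of `pℤ_{p²}`.  The resulting structure is a planar
nearring whose distributive elements are exactly `pℤ_{p²}`, all zero multipliers. -/
theorem stmt12 (p : ℕ) (hp : p.Prime) (hodd : Odd p)
    (Φ : Subgroup (ZMod (p ^ 2))ˣ) (hΦcard : Nat.card Φ = p - 1) (hΦcyc : IsCyclic Φ)
    (R : Set (ZMod (p ^ 2))) (hpR : (p : ZMod (p ^ 2)) ∈ R)
    -- the remaining representatives form a coset of `pℤ_{p²}`:
    (hcoset : ∃ a : ZMod (p ^ 2),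
      R \ {(p : ZMod (p ^ 2))} = {x | ∃ y : ZMod (p ^ 2), x = a + (p : ZMod (p ^ 2)) * y})
    (rep : ZMod (p ^ 2) → ZMod (p ^ 2)) (aut : ZMod (p ^ 2) → Φ)
    (hrep : ∀ n : ZMod (p ^ 2), n ≠ 0 → rep n ∈ R)
    (hdec : ∀ n : ZMod (p ^ 2), n ≠ 0 → ((aut n : (ZMod (p ^ 2))ˣ) : ZMod (p ^ 2)) * rep n = n)
    (huniq : ∀ n : ZMod (p ^ 2), n ≠ 0 → ∀ r ∈ R, ∀ u : Φ,
      ((u : (ZMod (p ^ 2))ˣ) : ZMod (p ^ 2)) * r = n → r = rep n ∧ u = aut n)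
    (mul : ZMod (p ^ 2) → ZMod (p ^ 2) → ZMod (p ^ 2))
    (hmul0 : ∀ a b : ZMod (p ^ 2), b = 0 ∨ rep b = (p : ZMod (p ^ 2)) → mul a b = 0)
    (hmul : ∀ a b : ZMod (p ^ 2), b ≠ 0 → rep b ≠ (p : ZMod (p ^ 2)) →
      mul a b = ((aut b : (ZMod (p ^ 2))ˣ) : ZMod (p ^ 2)) * a) :
    -- `(ℤ_{p²}, +, mul)` is a planar nearring:
    (∀ a b c : ZMod (p ^ 2), mul (mul a b) c = mul a (mul b c)) ∧
    (∀ a b c : ZMod (p ^ 2), mul (a + b) c = mul a c + mul b c) ∧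
    (∃ a b c : ZMod (p ^ 2), ¬ (∀ x, mul x a = mul x b) ∧ ¬ (∀ x, mul x b = mul x c) ∧
      ¬ (∀ x, mul x a = mul x c)) ∧
    (∀ a b c : ZMod (p ^ 2), ¬ (∀ x, mul x a = mul x b) →
      ∃! x : ZMod (p ^ 2), mul x a = mul x b + c) ∧
    -- its distributive elements are exactly `pℤ_{p²}`:
    ({d : ZMod (p ^ 2) | ∀ a b : ZMod (p ^ 2), mul d (a + b) = mul d a + mul d b}
      = {x : ZMod (p ^ 2) | ∃ y : ZMod (p ^ 2), x = (p : ZMod (p ^ 2)) * y}) ∧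
    -- all of which are zero multipliers:
    ({d : ZMod (p ^ 2) | ∀ a b : ZMod (p ^ 2), mul d (a + b) = mul d a + mul d b}
      ⊆ {n : ZMod (p ^ 2) | ∀ a : ZMod (p ^ 2), mul a n = 0}) := by
  haveI : Fact p.Prime := ⟨hp⟩
  have hp2 : 2 ≤ p := hp.two_le
  have hp3 : 3 ≤ p := by
    rcases hodd with ⟨k, hk⟩; omega
  have hq1 : 1 < p ^ 2 := by nlinarith
  haveI : NeZero (p ^ 2) := ⟨by positivity⟩
  haveI : Fact (1 < p ^ 2) := ⟨hq1⟩
  -- the reduction mod p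
  set f : ZMod (p ^ 2) →+* ZMod p := ZMod.castHom (dvd_pow_self p two_ne_zero) (ZMod p) with hfdef
  have hfval : ∀ x : ZMod (p ^ 2), f x = ((x.val : ℕ) : ZMod p) := by
    intro x
    rw [hfdef, ZMod.castHom_apply, ← ZMod.natCast_val]
  have hf0 : ∀ x : ZMod (p ^ 2), f x = 0 ↔ p ∣ x.val := by
    intro x
    rw [hfval, ZMod.natCast_eq_zero_iff]
  have hunit : ∀ x : ZMod (p ^ 2), IsUnit x ↔ f x ≠ 0 := by
    intro x
    rw [ne_eq, hf0]
    constructor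
    · rintro hu hdvd
      rw [show x = ((x.val : ℕ) : ZMod (p ^ 2)) by rw [ZMod.natCast_val, ZMod.cast_id]] at hu
      rw [ZMod.isUnit_iff_coprime, Nat.coprime_pow_right_iff (by norm_num)] at hu
      exact (Nat.Prime.coprime_iff_not_dvd hp).mp (Nat.coprime_comm.mp hu) hdvd
    · intro hdvd
      rw [show x = ((x.val : ℕ) : ZMod (p ^ 2)) by rw [ZMod.natCast_val, ZMod.cast_id],
        ZMod.isUnit_iff_coprime, Nat.coprime_pow_right_iff (by norm_num)]
      exact Nat.coprime_comm.mp ((Nat.Prime.coprime_iff_not_dvd hp).mpr hdvd)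
  have hppz : ∀ x : ZMod (p ^ 2), f x = 0 ↔ ∃ t : ZMod (p ^ 2), x = (p : ZMod (p ^ 2)) * t := by
    intro x
    rw [hf0]
    constructor
    · intro hdvd
      refine ⟨((x.val / p : ℕ) : ZMod (p ^ 2)), ?_⟩
      rw [← Nat.cast_mul, Nat.mul_div_cancel' hdvd, ZMod.natCast_val, ZMod.cast_id]
    · rintro ⟨t, rfl⟩
      have : ((p : ZMod (p ^ 2)) * t).val = (p * t.val) % p ^ 2 := by
        rw [ZMod.val_mul, ZMod.val_natCast_of_lt (by nlinarith)]
      rw [this, Nat.dvd_mod_iff (dvd_pow_self p two_ne_zero)]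
      exact Dvd.intro _ rfl
  have hfp : f (p : ZMod (p ^ 2)) = 0 := by
    rw [map_natCast, ZMod.natCast_self]
  have hpne : (p : ZMod (p ^ 2)) ≠ 0 := by
    intro h
    rw [ZMod.natCast_eq_zero_iff] at h
    have := Nat.le_of_dvd (by omega) h
    nlinarith
  have hpp : (p : ZMod (p ^ 2)) * (p : ZMod (p ^ 2)) = 0 := by
    rw [← Nat.cast_mul, ← pow_two, ZMod.natCast_self]
  have hpmul0 : ∀ x : ZMod (p ^ 2), (p : ZMod (p ^ 2)) * x = 0 ↔ f x = 0 := by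
    intro x
    constructor
    · intro h
      by_contra hfx
      obtain ⟨u, hu⟩ := (hunit x).mpr hfx
      have : (p : ZMod (p ^ 2)) = (p : ZMod (p ^ 2)) * x * (↑u⁻¹ : ZMod (p ^ 2)) := by
        rw [← hu, mul_assoc, u.mul_inv, mul_one]
      rw [h, zero_mul] at this
      exact hpne this
    · intro h
      obtain ⟨t, rfl⟩ := (hppz x).mp h
      rw [← mul_assoc, hpp, zero_mul]
  -- units of Φ coerce to units
  have hΦunit : ∀ w : Φ, IsUnit ((w : (ZMod (p ^ 2))ˣ) : ZMod (p ^ 2)) := fun w => (w : (ZMod (p ^ 2))ˣ).isUnit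
  have hΦf : ∀ w : Φ, f ((w : (ZMod (p ^ 2))ˣ) : ZMod (p ^ 2)) ≠ 0 := fun w => (hunit _).mp (hΦunit w)
  -- KEY: for w ∈ Φ with coercion ≠ 1, w - 1 is a unit
  have key1 : ∀ w : Φ, ((w : (ZMod (p ^ 2))ˣ) : ZMod (p ^ 2)) ≠ 1 →
      IsUnit (((w : (ZMod (p ^ 2))ˣ) : ZMod (p ^ 2)) - 1) := by
    intro w hw1
    set x : ZMod (p ^ 2) := ((w : (ZMod (p ^ 2))ˣ) : ZMod (p ^ 2)) with hx
    have hxp1 : x ^ (p - 1) = 1 := by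
      have : w ^ (p - 1) = 1 := by rw [← hΦcard]; exact pow_card_eq_one'
      have := congrArg (fun z : Φ => ((z : (ZMod (p ^ 2))ˣ) : ZMod (p ^ 2))) this
      simpa using this
    by_contra hnu
    apply hw1
    rw [hunit, not_not, hppz] at hnu
    obtain ⟨t, ht⟩ := hnu
    have hx1 : x = 1 + (p : ZMod (p ^ 2)) * t := by rw [← ht]; ring
    have hsq : ((p : ZMod (p ^ 2)) * t) * ((p : ZMod (p ^ 2)) * t) = 0 := by
      calc ((p : ZMod (p ^ 2)) * t) * ((p : ZMod (p ^ 2)) * t)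
          = ((p : ZMod (p ^ 2)) * (p : ZMod (p ^ 2))) * (t * t) := by ring
        _ = 0 := by rw [hpp, zero_mul]
    have hxp : x ^ p = 1 := by
      rw [hx1, aux_one_add_sq_zero_pow _ hsq p]
      have : (p : ZMod (p ^ 2)) * ((p : ZMod (p ^ 2)) * t) = 0 := by
        rw [← mul_assoc, hpp, zero_mul]
      rw [this, add_zero]
    have hsplit : x ^ p = x ^ (p - 1) * x := by
      rw [← pow_succ]
      congr 1
      omega
    rw [hxp, hxp1, one_mul] at hsplit
    exact hsplit.symm
  -- difference of distinct Φ-elements is a unit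
  have keyDiff : ∀ u v : Φ,
      ((u : (ZMod (p ^ 2))ˣ) : ZMod (p ^ 2)) ≠ ((v : (ZMod (p ^ 2))ˣ) : ZMod (p ^ 2)) →
      IsUnit (((u : (ZMod (p ^ 2))ˣ) : ZMod (p ^ 2)) - ((v : (ZMod (p ^ 2))ˣ) : ZMod (p ^ 2))) := by
    intro u v huv
    set w : Φ := v⁻¹ * u with hwdef
    have hvw : ((v : (ZMod (p ^ 2))ˣ) : ZMod (p ^ 2)) * ((w : (ZMod (p ^ 2))ˣ) : ZMod (p ^ 2))
        = ((u : (ZMod (p ^ 2))ˣ) : ZMod (p ^ 2)) := by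
      have hw2 : (w : (ZMod (p ^ 2))ˣ) = (v : (ZMod (p ^ 2))ˣ)⁻¹ * (u : (ZMod (p ^ 2))ˣ) := rfl
      have hvv : ((v : (ZMod (p ^ 2))ˣ) : ZMod (p ^ 2)) * ((((v : (ZMod (p ^ 2))ˣ))⁻¹ : (ZMod (p ^ 2))ˣ) : ZMod (p ^ 2)) = 1 := Units.mul_inv _
      rw [hw2, Units.val_mul, ← mul_assoc, hvv, one_mul]
    have hw1 : ((w : (ZMod (p ^ 2))ˣ) : ZMod (p ^ 2)) ≠ 1 := by
      intro h
      apply huv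
      rw [← hvw, h, mul_one]
    have heq : ((u : (ZMod (p ^ 2))ˣ) : ZMod (p ^ 2)) - ((v : (ZMod (p ^ 2))ˣ) : ZMod (p ^ 2))
        = ((v : (ZMod (p ^ 2))ˣ) : ZMod (p ^ 2)) * (((w : (ZMod (p ^ 2))ˣ) : ZMod (p ^ 2)) - 1) := by
      rw [mul_sub, hvw, mul_one]
    rw [heq]
    exact (hΦunit v).mul (key1 w hw1)
  -- each element's multiplier class
  have mulclass : ∀ b : ZMod (p ^ 2), ∃ c : ZMod (p ^ 2),
      (∀ x, mul x b = c * x) ∧ (c = 0 ∨ ∃ w : Φ, ((w : (ZMod (p ^ 2))ˣ) : ZMod (p ^ 2)) = c) := by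
    intro b
    by_cases hb : b = 0 ∨ rep b = (p : ZMod (p ^ 2))
    · exact ⟨0, fun x => by rw [hmul0 x b hb, zero_mul], Or.inl rfl⟩
    · push_neg at hb
      exact ⟨_, fun x => hmul x b hb.1 hb.2, Or.inr ⟨aut b, rfl⟩⟩
  -- the coset basepoint
  obtain ⟨a₀, hA⟩ := hcoset
  have ha₀R : a₀ ∈ R \ {(p : ZMod (p ^ 2))} := by
    rw [hA]; exact ⟨0, by ring⟩
  have h1ne : (1 : ZMod (p ^ 2)) ≠ 0 := one_ne_zero
  have hf1 : f (1 : ZMod (p ^ 2)) ≠ 0 := by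
    rw [map_one]; exact one_ne_zero
  have hfa₀ : f a₀ ≠ 0 := by
    intro hfa
    have h1R : rep 1 ∈ R := hrep 1 h1ne
    by_cases h1p : rep 1 = (p : ZMod (p ^ 2))
    · apply hf1
      rw [← hdec 1 h1ne, map_mul, h1p, hfp, mul_zero]
    · have : rep 1 ∈ R \ {(p : ZMod (p ^ 2))} := ⟨h1R, h1p⟩
      rw [hA] at this
      obtain ⟨y, hy⟩ := this
      apply hf1
      rw [← hdec 1 h1ne, map_mul, hy, map_add, hfa, map_mul, hfp, zero_mul, add_zero, mul_zero]
  have ha₀ne : a₀ ≠ 0 := by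
    intro h; apply hfa₀; rw [h, map_zero]
  -- characterization: rep n = p ↔ f n = 0 (for n ≠ 0)
  have hrepp : ∀ n : ZMod (p ^ 2), n ≠ 0 → (rep n = (p : ZMod (p ^ 2)) ↔ f n = 0) := by
    intro n hn
    constructor
    · intro h
      rw [← hdec n hn, map_mul, h, hfp, mul_zero]
    · intro hfn
      by_contra hrp
      have : rep n ∈ R \ {(p : ZMod (p ^ 2))} := ⟨hrep n hn, hrp⟩
      rw [hA] at this
      obtain ⟨y, hy⟩ := this
      have : f n = f ((aut n : (ZMod (p ^ 2))ˣ) : ZMod (p ^ 2)) * f a₀ := by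
        conv_lhs => rw [← hdec n hn]
        rw [map_mul, hy, map_add, map_mul, hfp, zero_mul, add_zero]
      rw [hfn] at this
      exact mul_ne_zero (hΦf (aut n)) hfa₀ this.symm
  -- rep and aut of p
  have hrp : rep (p : ZMod (p ^ 2)) = (p : ZMod (p ^ 2)) :=
    (huniq _ hpne _ hpR 1 (by simp)).1.symm
  -- rep and aut of a₀
  have hra₀' := huniq a₀ ha₀ne a₀ ha₀R.1 1 (by simp)
  have hra₀1 : rep a₀ = a₀ := hra₀'.1.symm
  have hra₀2 : aut a₀ = 1 := hra₀'.2.symm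
  have ha₀p : a₀ ≠ (p : ZMod (p ^ 2)) := ha₀R.2
  -- multiplying by a Φ-element preserves rep and composes aut
  have hrmul : ∀ (w : Φ) (b : ZMod (p ^ 2)), b ≠ 0 →
      rep (((w : (ZMod (p ^ 2))ˣ) : ZMod (p ^ 2)) * b) = rep b ∧
      aut (((w : (ZMod (p ^ 2))ˣ) : ZMod (p ^ 2)) * b) = w * aut b := by
    intro w b hb
    have hwb : ((w : (ZMod (p ^ 2))ˣ) : ZMod (p ^ 2)) * b ≠ 0 := by
      intro h
      exact hb ((Units.mul_right_eq_zero (w : (ZMod (p ^ 2))ˣ)).mp h)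
    have := huniq _ hwb (rep b) (hrep b hb) (w * aut b)
      (by push_cast; rw [mul_assoc, hdec b hb])
    exact ⟨this.1.symm, this.2.symm⟩
  -- main components
  refine ⟨?assoc, ?rdistrib, ?three, ?planar, ?dset, ?zm⟩
  case assoc =>
    intro a b c
    by_cases hc : c = 0 ∨ rep c = (p : ZMod (p ^ 2))
    · rw [hmul0 (mul a b) c hc, hmul0 b c hc, hmul0 a 0 (Or.inl rfl)]
    · push_neg at hc
      rw [hmul (mul a b) c hc.1 hc.2, hmul b c hc.1 hc.2]
      by_cases hb0 : b = 0
      · rw [hb0, hmul0 a 0 (Or.inl rfl), mul_zero, hmul0 a 0 (Or.inl rfl)]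
      · by_cases hbp : rep b = (p : ZMod (p ^ 2))
        · rw [hmul0 a b (Or.inr hbp), mul_zero]
          have h1 := (hrmul (aut c) b hb0).1
          rw [hbp] at h1
          rw [hmul0 a _ (Or.inr h1)]
        · rw [hmul a b hb0 hbp]
          have hwb : ((aut c : (ZMod (p ^ 2))ˣ) : ZMod (p ^ 2)) * b ≠ 0 := by
            intro h
            exact hb0 ((Units.mul_right_eq_zero (aut c : (ZMod (p ^ 2))ˣ)).mp h)
          have h1 := (hrmul (aut c) b hb0).1
          have h2 := (hrmul (aut c) b hb0).2
          rw [hmul a _ hwb (by rw [h1]; exact hbp), h2]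
          push_cast
          ring
  case rdistrib =>
    intro a b c
    obtain ⟨cc, hcc, -⟩ := mulclass c
    rw [hcc, hcc, hcc, mul_add]
  case three =>
    -- a nontrivial element of Φ
    have : ∃ w : Φ, w ≠ 1 := by
      by_contra h
      push_neg at h
      haveI : Subsingleton Φ := ⟨fun a b => by rw [h a, h b]⟩
      have : Nat.card Φ = 1 := Nat.card_eq_one_iff_unique.mpr ⟨⟨fun a b => by rw [h a, h b]⟩, ⟨1⟩⟩
      omega
    obtain ⟨w, hw⟩ := this
    have hwne1 : ((w : (ZMod (p ^ 2))ˣ) : ZMod (p ^ 2)) ≠ 1 := by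
      intro h
      apply hw
      have h2 : (w : (ZMod (p ^ 2))ˣ) = 1 := Units.ext (h.trans Units.val_one.symm)
      exact OneMemClass.coe_eq_one.mp h2
    have hmulp : ∀ x, mul x (p : ZMod (p ^ 2)) = 0 := fun x => hmul0 x _ (Or.inr hrp)
    have hmula₀ : ∀ x, mul x a₀ = x := by
      intro x
      rw [hmul x a₀ ha₀ne (by rw [hra₀1]; exact ha₀p), hra₀2, OneMemClass.coe_one, Units.val_one, one_mul]
    set c : ZMod (p ^ 2) := ((w : (ZMod (p ^ 2))ˣ) : ZMod (p ^ 2)) * a₀ with hcdef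
    have hcne : c ≠ 0 := by
      intro h
      exact ha₀ne ((Units.mul_right_eq_zero (w : (ZMod (p ^ 2))ˣ)).mp h)
    have hrc : rep c = a₀ := by rw [hcdef, (hrmul w a₀ ha₀ne).1, hra₀1]
    have hac : aut c = w := by rw [hcdef, (hrmul w a₀ ha₀ne).2, hra₀2, mul_one]
    have hmulc : ∀ x, mul x c = ((w : (ZMod (p ^ 2))ˣ) : ZMod (p ^ 2)) * x := by
      intro x
      rw [hmul x c hcne (by rw [hrc]; exact ha₀p), hac]
    refine ⟨(p : ZMod (p ^ 2)), a₀, c, ?_, ?_, ?_⟩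
    · intro h
      have := h 1
      rw [hmulp, hmula₀] at this
      exact one_ne_zero this.symm
    · intro h
      have := h 1
      rw [hmula₀, hmulc, mul_one] at this
      exact hwne1 this.symm
    · intro h
      have := h 1
      rw [hmulp, hmulc, mul_one] at this
      exact (w : (ZMod (p ^ 2))ˣ).ne_zero this.symm
  case planar =>
    intro a b c hne
    obtain ⟨ca, hca, hca'⟩ := mulclass a
    obtain ⟨cb, hcb, hcb'⟩ := mulclass b
    have hdiff : IsUnit (ca - cb) := by
      have hcacb : ca ≠ cb := by
        intro h
        apply hne
        intro x
        rw [hca, hcb, h]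
      rcases hca' with rfl | ⟨u, rfl⟩
      · rcases hcb' with rfl | ⟨v, rfl⟩
        · exact absurd rfl hcacb
        · rw [zero_sub]
          exact (hΦunit v).neg
      · rcases hcb' with rfl | ⟨v, rfl⟩
        · rw [sub_zero]
          exact hΦunit u
        · exact keyDiff u v hcacb
    obtain ⟨U, hU⟩ := hdiff
    have hiff : ∀ y : ZMod (p ^ 2), (mul y a = mul y b + c) ↔ y = (↑U⁻¹ : ZMod (p ^ 2)) * c := by
      intro y
      rw [hca, hcb]
      constructor
      · intro h
        have h1 : (ca - cb) * y = c := by linear_combination h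
        have h2 : (↑U⁻¹ : ZMod (p ^ 2)) * ((ca - cb) * y) = (↑U⁻¹ : ZMod (p ^ 2)) * c := by
          rw [h1]
        rwa [← mul_assoc, ← hU, Units.inv_mul, one_mul] at h2
      · rintro rfl
        have h3 : (ca - cb) * ((↑U⁻¹ : ZMod (p ^ 2)) * c) = c := by
          rw [← hU, ← mul_assoc, Units.mul_inv, one_mul]
        linear_combination h3
    exact ⟨(↑U⁻¹ : ZMod (p ^ 2)) * c, (hiff _).mpr rfl, fun y hy => (hiff y).mp hy⟩
  case dset =>
    ext d
    simp only [Set.mem_setOf_eq]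
    constructor
    · -- distributive → d ∈ pℤ
      intro hd
      have hscale : ∀ k : ℕ, mul d ((k : ℕ) : ZMod (p ^ 2)) = ((k : ℕ) : ZMod (p ^ 2)) * mul d 1 := by
        intro k
        induction k with
        | zero => rw [Nat.cast_zero, hmul0 d 0 (Or.inl rfl), zero_mul]
        | succ k ih =>
          rw [Nat.cast_succ, hd, ih, add_mul, one_mul]
      have hp0 := hscale p
      rw [hmul0 d _ (Or.inr hrp)] at hp0
      have hfm : f (mul d 1) = 0 := (hpmul0 (mul d 1)).mp hp0.symm
      have h1p : rep (1 : ZMod (p ^ 2)) ≠ (p : ZMod (p ^ 2)) :=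
        fun h => hf1 ((hrepp 1 h1ne).mp h)
      rw [hmul d 1 h1ne h1p, map_mul] at hfm
      have hfd : f d = 0 := by
        rcases mul_eq_zero.mp hfm with h | h
        · exact absurd h (hΦf (aut 1))
        · exact h
      exact (hppz d).mp hfd
    · -- d ∈ pℤ → distributive
      rintro ⟨t, rfl⟩
      obtain ⟨A, hA0⟩ := (hunit a₀).mpr hfa₀
      set s : ZMod (p ^ 2) := (p : ZMod (p ^ 2)) * t * (↑A⁻¹ : ZMod (p ^ 2)) with hsdef
      have claim : ∀ n : ZMod (p ^ 2), mul ((p : ZMod (p ^ 2)) * t) n = s * n := by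
        intro n
        by_cases hn0 : n = 0
        · rw [hn0, hmul0 _ 0 (Or.inl rfl), mul_zero]
        · by_cases hfn : f n = 0
          · rw [hmul0 _ n (Or.inr ((hrepp n hn0).mpr hfn))]
            obtain ⟨y, rfl⟩ := (hppz n).mp hfn
            symm
            rw [hsdef]
            calc (p : ZMod (p ^ 2)) * t * (↑A⁻¹ : ZMod (p ^ 2)) * ((p : ZMod (p ^ 2)) * y)
                = ((p : ZMod (p ^ 2)) * (p : ZMod (p ^ 2))) * (t * (↑A⁻¹ : ZMod (p ^ 2)) * y) := by ring
              _ = 0 := by rw [hpp, zero_mul]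
          · have hrpn : rep n ≠ (p : ZMod (p ^ 2)) :=
              fun h => hfn ((hrepp n hn0).mp h)
            rw [hmul _ n hn0 hrpn]
            have : rep n ∈ R \ {(p : ZMod (p ^ 2))} := ⟨hrep n hn0, hrpn⟩
            rw [hA] at this
            obtain ⟨y, hy⟩ := this
            set u : ZMod (p ^ 2) := ((aut n : (ZMod (p ^ 2))ˣ) : ZMod (p ^ 2)) with hudef
            have hn : u * (a₀ + (p : ZMod (p ^ 2)) * y) = n := by
              rw [← hy, hdec n hn0]
            have hAinv : (↑A⁻¹ : ZMod (p ^ 2)) * a₀ = 1 := by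
              rw [← hA0, Units.inv_mul]
            calc u * ((p : ZMod (p ^ 2)) * t)
                = (t * u * ((↑A⁻¹ : ZMod (p ^ 2)) * a₀)) * (p : ZMod (p ^ 2)) := by
                  rw [hAinv]; ring
              _ = s * (u * (a₀ + (p : ZMod (p ^ 2)) * y))
                  - ((p : ZMod (p ^ 2)) * (p : ZMod (p ^ 2))) * (t * (↑A⁻¹ : ZMod (p ^ 2)) * u * y) := by
                  rw [hsdef]; ring
              _ = s * n := by rw [hpp, zero_mul, sub_zero, hn]
      intro a b
      rw [claim, claim, claim, mul_add]
  case zm =>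
    intro d hd a
    simp only [Set.mem_setOf_eq] at hd ⊢
    -- from the dset argument: d is in pℤ
    have hscale : ∀ k : ℕ, mul d ((k : ℕ) : ZMod (p ^ 2)) = ((k : ℕ) : ZMod (p ^ 2)) * mul d 1 := by
      intro k
      induction k with
      | zero => rw [Nat.cast_zero, hmul0 d 0 (Or.inl rfl), zero_mul]
      | succ k ih =>
        rw [Nat.cast_succ, hd, ih, add_mul, one_mul]
    have hp0 := hscale p
    rw [hmul0 d _ (Or.inr hrp)] at hp0
    have hfm : f (mul d 1) = 0 := (hpmul0 (mul d 1)).mp hp0.symm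
    by_cases hd0 : d = 0
    · exact hmul0 a d (Or.inl hd0)
    · have h1p : rep (1 : ZMod (p ^ 2)) ≠ (p : ZMod (p ^ 2)) :=
        fun h => hf1 ((hrepp 1 h1ne).mp h)
      rw [hmul d 1 h1ne h1p, map_mul] at hfm
      have hfd : f d = 0 := by
        rcases mul_eq_zero.mp hfm with h | h
        · exact absurd h (hΦf (aut 1))
        · exact h
      exact hmul0 a d (Or.inr ((hrepp d hd0).mpr hfd))
end

section
/- Let N be a planar nearring such that the distributive elements D(N) intersect only zero multiplier orbits (and D(N) is nontrivial). Then the generalized centre GC(N) equals the set of zero multipliers, which is an ideal of N. -/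
/-- if `D(N)` is nontrivial and meets only zero multiplier orbits, then
`GC(N)` equals the set of zero multipliers, which is an ideal of `N`. -/
theorem stmt16 {Φ N : Type*} [Group Φ] [PlanarNearring N] [DistribMulAction Φ N]
    (S : FerreroStructure Φ N) (hD : ∃ d ∈ DSet N, d ≠ 0)
    (hzm : DSet N ⊆ ZM N) :
    GC N = ZM N ∧
    -- the zero multipliers form an ideal:
    (0 : N) ∈ ZM N ∧
    (∀ x ∈ ZM N, ∀ y ∈ ZM N, x + y ∈ ZM N) ∧
    (∀ x ∈ ZM N, -x ∈ ZM N) ∧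
    (∀ n : N, ∀ k ∈ ZM N, n + k - n ∈ ZM N) ∧
    (∀ k ∈ ZM N, ∀ n : N, k * n ∈ ZM N) ∧
    (∀ k ∈ ZM N, ∀ n m : N, n * m - n * (m + k) ∈ ZM N) := by
  obtain ⟨d, hd, hd0⟩ := hD
  have hdZM : d ∈ ZM N := hzm hd
  have zero_mul' : ∀ c : N, (0 : N) * c = 0 := by
    intro c
    have h := RightNearring.right_distrib (0 : N) 0 c
    rw [add_zero] at h
    have h2 : (0:N)*c + (0:N)*c = (0:N)*c + 0 := by rw [add_zero]; exact h.symm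
    exact add_left_cancel h2
  have mul_zero' : ∀ a : N, a * (0 : N) = 0 := by
    intro a
    have hdd : d * d = 0 := hdZM d
    calc a * (0:N) = a * (d * d) := by rw [hdd]
      _ = a * d * d := (RightNearring.mul_assoc a d d).symm
      _ = 0 * d := by rw [hdZM a]
      _ = 0 := zero_mul' d
  have hzero : (0 : N) ∈ ZM N := mul_zero'
  have smul_ne : ∀ (φ : Φ) (x : N), x ≠ 0 → φ • x ≠ 0 := by
    intro φ x hx h
    apply hx
    have : φ⁻¹ • (φ • x) = φ⁻¹ • (0 : N) := by rw [h]
    rwa [inv_smul_smul, smul_zero] at this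
  -- key characterization: n ∈ ZM ↔ d * n = 0
  have key : ∀ n : N, n ∈ ZM N ↔ d * n = 0 := by
    intro n
    constructor
    · intro h; exact h d
    · intro h
      by_cases hn : n = 0
      · subst hn; exact hzero
      · by_cases hm : S.rep n ∈ S.M
        · intro a; exact S.mul_zm a n hn hm
        · exfalso
          have := S.mul_eq d n hn hm
          rw [h] at this
          exact smul_ne (S.aut n) d hd0 this.symm
  have dneg : ∀ x : N, d * (-x) = -(d * x) := by
    intro x
    have h := hd x (-x)
    rw [add_neg_cancel, mul_zero'] at h
    exact (neg_eq_of_add_eq_zero_right h.symm).symm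
  have hadd : ∀ x ∈ ZM N, ∀ y ∈ ZM N, x + y ∈ ZM N := by
    intro x hx y hy
    rw [key] at hx hy ⊢
    rw [hd x y, hx, hy, add_zero]
  have hneg : ∀ x ∈ ZM N, -x ∈ ZM N := by
    intro x hx
    rw [key] at hx ⊢
    rw [dneg, hx, neg_zero]
  have hrmul : ∀ m ∈ ZM N, ∀ n : N, n * m ∈ ZM N := by
    intro m hm n a
    rw [← RightNearring.mul_assoc a n m]
    exact hm (a * n)
  refine ⟨?_, hzero, hadd, hneg, ?_, ?_, ?_⟩
  · ext n
    constructor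
    · intro hn
      rw [key n]
      have := hn d hd
      rw [hdZM n] at this
      exact this.symm
    · intro hn e he
      have heZM := hzm he
      rw [heZM n, hn e]
  · intro n k hk
    rw [key] at hk ⊢
    rw [sub_eq_add_neg, hd (n + k) (-n), hd n k, hk, add_zero, dneg, add_neg_cancel]
  · intro k hk n a
    rw [← RightNearring.mul_assoc a k n, hk a, zero_mul']
  · intro k hk n m
    by_cases hm : m ∈ ZM N
    · have hmk : m + k ∈ ZM N := hadd m hm k hk
      have h1 := hrmul m hm n
      have h2 := hneg _ (hrmul (m + k) hmk n)
      rw [sub_eq_add_neg]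
      exact hadd _ h1 _ h2
    · by_cases hmk : m + k ∈ ZM N
      · exact absurd (by
          have := hadd (m + k) hmk (-k) (hneg k hk)
          rwa [add_assoc, add_neg_cancel, add_zero] at this) hm
      · -- both m and m + k are not zero multipliers
        have hm0 : m ≠ 0 := fun h => hm (h ▸ hzero)
        have hmk0 : m + k ≠ 0 := fun h => hmk (h ▸ hzero)
        have hmM : S.rep m ∉ S.M := fun h => hm (fun a => S.mul_zm a m hm0 h)
        have hmkM : S.rep (m + k) ∉ S.M := fun h => hmk (fun a => S.mul_zm a (m + k) hmk0 h)
        have e1 : d * m = S.aut m • d := S.mul_eq d m hm0 hmM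
        have e2 : d * (m + k) = S.aut (m + k) • d := S.mul_eq d (m + k) hmk0 hmkM
        have e3 : d * (m + k) = d * m := by rw [hd m k, hk d, add_zero]
        have e4 : S.aut (m + k) • d = S.aut m • d := by rw [← e1, ← e2, e3]
        have haut : S.aut (m + k) = S.aut m := by
          by_contra hne
          have hψ : (S.aut m)⁻¹ * S.aut (m + k) ≠ 1 := by
            intro h
            rw [inv_mul_eq_one] at h; exact hne h.symm
          have hfix : ((S.aut m)⁻¹ * S.aut (m + k)) • d = d := by
            rw [mul_smul, e4, inv_smul_smul]
          exact hd0 (S.fpf _ hψ d hfix)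
        have : n * m - n * (m + k) = 0 := by
          rw [S.mul_eq n m hm0 hmM, S.mul_eq n (m + k) hmk0 hmkM, haut, sub_self]
        rw [this]
        exact hzero
end

section
/- Let N be a planar nearring such that D(N) intersects at least two distinct Φ-orbits nontrivially, one of which is not a zero multiplier orbit. Then GC(N) = {0}. -/
/-- if `D(N)` meets two distinct `Φ`-orbits nontrivially, one of which is
not a zero multiplier orbit, then `GC(N) = {0}`. -/
theorem stmt17 {Φ N : Type*} [Group Φ] [PlanarNearring N] [DistribMulAction Φ N]
    (S : FerreroStructure Φ N) (a b : N)
    (ha : a ∈ DSet N) (hb : b ∈ DSet N) (ha0 : a ≠ 0) (hb0 : b ≠ 0)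
    (hdistinct : S.rep a ≠ S.rep b) (haM : S.rep a ∉ S.M) :
    GC N = {0} := by
  ext n
  simp only [Set.mem_singleton_iff]
  constructor
  · intro hn
    by_contra hn0
    have hna := hn a ha
    have hnb := hn b hb
    have key : ∀ c : N, c ∈ DSet N → c ≠ 0 → S.rep c ∉ S.M → S.rep n ∉ S.M →
        S.rep n = S.rep c := by
      intro c hc hc0 hcM hnM
      have h1 : n * c = S.aut c • n := S.mul_eq n c hc0 hcM
      have h2 : c * n = S.aut n • c := S.mul_eq c n hn0 hnM
      have h3 : S.aut c • n = S.aut n • c := by rw [← h1, ← h2, hn c hc]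
      have h4 : ((S.aut c)⁻¹ * S.aut n * S.aut c) • S.rep c = n := by
        rw [mul_smul, mul_smul, S.decomp c hc0, ← h3, inv_smul_smul]
      exact ((S.unique n hn0 (S.rep c) (S.rep_mem c hc0) _ h4).1).symm
    by_cases hnM : S.rep n ∈ S.M
    · have h1 : a * n = 0 := S.mul_zm a n hn0 hnM
      have h2 : n * a = S.aut a • n := S.mul_eq n a ha0 haM
      have h3 : S.aut a • n = 0 := by rw [← h2, hna, h1]
      exact hn0 (by simpa using congrArg (fun x => (S.aut a)⁻¹ • x) h3)
    · have hra := key a ha ha0 haM hnM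
      by_cases hbM : S.rep b ∈ S.M
      · have h1 : n * b = 0 := S.mul_zm n b hb0 hbM
        have h2 : b * n = S.aut n • b := S.mul_eq b n hn0 hnM
        have h3 : S.aut n • b = 0 := by rw [← h2, ← hnb, h1]
        exact hb0 (by simpa using congrArg (fun x => (S.aut n)⁻¹ • x) h3)
      · exact hdistinct (hra.symm.trans (key b hb hb0 hbM hnM))
  · intro h; subst h
    intro d hd
    have hd0 : d * 0 = 0 := by
      have := hd 0 0
      rw [add_zero] at this
      exact left_eq_add.mp this
    rw [hd0]
    by_cases hd' : d = 0
    · subst hd'; exact hd0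
    · by_cases hM : S.rep d ∈ S.M
      · exact S.mul_zm 0 d hd' hM
      · rw [S.mul_eq 0 d hd' hM, smul_zero]
end
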